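/- arXiv:math/0104198 — 10 statements merged into one kernel-verified Lean document; each statement's English description precedes it below -/
import Mathlib

section
/- If 𝒜 is a family of sets that is ∩-closed (A∩B ∈ 𝒜∪{∅} for all A,B ∈ 𝒜) and well-founded under ⊂, then the space X(𝒜) is scattered, i.e. every non-empty subspace has an isolated point. -/
open Set Topology

/-- `famU 𝒜 A` = members of `𝒜` included in `A`. -/
def famU {X : Type*} (𝒜 : Set (Set X)) (A : Set X) : Set (Set X) := {B ∈ 𝒜 | B ⊆ A}

/-- The coarsest topology on `𝒜` making each `U(A)`, `A ∈ 𝒜`, clopen. -/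
def famTop {X : Type*} (𝒜 : Set (Set X)) : TopologicalSpace 𝒜 :=
  TopologicalSpace.generateFrom
    {s | ∃ A ∈ 𝒜, s = (Subtype.val ⁻¹' famU 𝒜 A : Set 𝒜) ∨
      s = ((Subtype.val ⁻¹' famU 𝒜 A)ᶜ : Set 𝒜)}

/-- `A ∩ B ∈ 𝒜 ∪ {∅}` for all `A, B ∈ 𝒜`. -/
def InterClosed {X : Type*} (𝒜 : Set (Set X)) : Prop :=
  ∀ A ∈ 𝒜, ∀ B ∈ 𝒜, A ∩ B ∈ 𝒜 ∪ {(∅ : Set X)}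

/-- Any two members meeting each other are comparable. -/
def TreeLike {X : Type*} (𝒜 : Set (Set X)) : Prop :=
  ∀ A ∈ 𝒜, ∀ B ∈ 𝒜, (A ∩ B).Nonempty → A ⊆ B ∨ B ⊆ A

/-- The union of any nonempty `⊆`-chain in `𝒜` belongs to `𝒜`. -/
def ChainClosed {X : Type*} (𝒜 : Set (Set X)) : Prop :=
  ∀ ℬ ⊆ 𝒜, ℬ.Nonempty → IsChain (· ⊆ ·) ℬ → ⋃₀ ℬ ∈ 𝒜

/-- A space is scattered iff every nonempty subset has a point isolated in it. -/
def IsScatteredSpace (Y : Type*) [TopologicalSpace Y] : Prop :=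
  ∀ S : Set Y, S.Nonempty → ∃ x ∈ S, ∃ t : Set Y, IsOpen t ∧ t ∩ S = {x}

/-- The `o`-th Cantor–Bendixson level: isolated points of the complement of earlier levels. -/
noncomputable def cbLevel (Y : Type*) [TopologicalSpace Y] (o : Ordinal.{u}) : Set Y :=
  {x | (∀ p, (h : p < o) → x ∉ cbLevel Y p) ∧
    ∃ t : Set Y, IsOpen t ∧ t ∩ {y | ∀ p, (h : p < o) → y ∉ cbLevel Y p} = {x}}
termination_by o

/-- The Cantor–Bendixson height: least level that is empty. -/
noncomputable def cbHeight (Y : Type*) [TopologicalSpace Y] : Ordinal.{u} :=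
  sInf {o | cbLevel Y o = ∅}

/-- If `𝒜` is `∩`-closed and well-founded then `X(𝒜)` is scattered. -/
theorem stmt0 {X : Type*} (𝒜 : Set (Set X)) (hic : InterClosed 𝒜)
    (hwf : WellFounded (fun A B : 𝒜 => (A : Set X) ⊂ (B : Set X))) :
    @IsScatteredSpace 𝒜 (famTop 𝒜) := by
  intro S hS
  obtain ⟨A, hAS, hmin⟩ := hwf.has_min S hS
  refine ⟨A, hAS, Subtype.val ⁻¹' famU 𝒜 (A : Set X), ?_, ?_⟩
  · exact TopologicalSpace.GenerateOpen.basic _ ⟨A, A.2, Or.inl rfl⟩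
  · ext B
    constructor
    · rintro ⟨⟨-, hBA⟩, hBS⟩
      have : (B : Set X) = (A : Set X) := by
        by_contra h
        exact hmin B hBS ⟨hBA, fun hAB => h (subset_antisymm hBA hAB)⟩
      exact Subtype.ext this
    · intro hB
      have hBA : B = A := hB
      subst hBA
      exact ⟨⟨B.2, subset_rfl⟩, hAS⟩
end

section
/- If 𝒜 is a ∩-closed and well-founded family of sets, then for every A ∈ 𝒜 the set U(A) = {B ∈ 𝒜 : B ⊆ A} is compact in the space X(𝒜). -/
open Set Topology

/-- If `𝒜` is `∩`-closed and well-founded then each `U(A)`, `A ∈ 𝒜`, is compact in `X(𝒜)`. -/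
theorem stmt1 {X : Type*} (𝒜 : Set (Set X)) (hic : InterClosed 𝒜)
    (hwf : WellFounded (fun A B : 𝒜 => (A : Set X) ⊂ (B : Set X)))
    (A : Set X) (hA : A ∈ 𝒜) :
    @IsCompact 𝒜 (famTop 𝒜) (Subtype.val ⁻¹' famU 𝒜 A) := by
  classical
  letI := famTop 𝒜
  suffices h : ∀ a : 𝒜, IsCompact (Subtype.val ⁻¹' famU 𝒜 (a : Set X)) from h ⟨A, hA⟩
  intro a
  refine hwf.induction (C := fun a : 𝒜 => IsCompact (Subtype.val ⁻¹' famU 𝒜 (a : Set X))) a ?_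
  clear a
  intro b IH
  apply isCompact_of_finite_subcover
  intro ι U hUo hcov
  have hbmem : b ∈ Subtype.val ⁻¹' famU 𝒜 (b : Set X) := ⟨b.2, subset_rfl⟩
  obtain ⟨i₀, hi₀⟩ := mem_iUnion.1 (hcov hbmem)
  have hbasis := TopologicalSpace.isTopologicalBasis_of_subbasis
    (t := famTop 𝒜)
    (s := {s | ∃ A ∈ 𝒜, s = (Subtype.val ⁻¹' famU 𝒜 A : Set 𝒜) ∨
      s = ((Subtype.val ⁻¹' famU 𝒜 A)ᶜ : Set 𝒜)}) rfl
  obtain ⟨v, hv, hbv, hvsub⟩ := hbasis.exists_subset_of_mem_open hi₀ (hUo i₀)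
  obtain ⟨f, ⟨hffin, hfsub⟩, rfl⟩ := hv
  -- choose witnesses
  have hch : ∀ g : Set 𝒜, ∃ C : Set X, g ∈ f → C ∈ 𝒜 ∧
      (g = (Subtype.val ⁻¹' famU 𝒜 C : Set 𝒜) ∨ g = (Subtype.val ⁻¹' famU 𝒜 C)ᶜ) := by
    intro g
    by_cases hg : g ∈ f
    · obtain ⟨C, hC, hCe⟩ := hfsub hg
      exact ⟨C, fun _ => ⟨hC, hCe⟩⟩
    · exact ⟨∅, fun h => absurd h hg⟩
  choose C hC using hch
  set kset : Set 𝒜 → Set 𝒜 := fun g =>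
    if (b : Set X) ⊆ C g then ∅ else Subtype.val ⁻¹' famU 𝒜 ((b : Set X) ∩ C g) with hkset
  have hKcomp : IsCompact (⋃ g ∈ f, kset g) := by
    refine hffin.isCompact_biUnion ?_
    intro g hg
    by_cases hsub : (b : Set X) ⊆ C g
    · simp [hkset, hsub]
    · simp only [hkset, if_neg hsub]
      rcases hic b b.2 (C g) (hC g hg).1 with hmem | hemp
      · refine IH ⟨(b : Set X) ∩ C g, hmem⟩ ?_
        exact ssubset_iff_subset_ne.2 ⟨inter_subset_left,
          fun h => hsub (h ▸ inter_subset_right)⟩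
      · simp only [mem_singleton_iff] at hemp
        have : Set.Subsingleton ((Subtype.val ⁻¹' famU 𝒜 ((b : Set X) ∩ C g)) : Set 𝒜) := by
          intro x hx y hy
          have hx2 := hx.2
          have hy2 := hy.2
          rw [hemp, subset_empty_iff] at hx2 hy2
          exact Subtype.ext (hx2.trans hy2.symm)
        exact this.finite.isCompact
  have hKsub : (⋃ g ∈ f, kset g) ⊆ ⋃ i, U i := by
    refine subset_trans ?_ hcov
    intro x hx
    obtain ⟨g, hg, hxg⟩ := mem_iUnion₂.1 hx
    by_cases hsub : (b : Set X) ⊆ C g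
    · simp [hkset, hsub] at hxg
    · simp only [hkset, if_neg hsub] at hxg
      exact ⟨hxg.1, hxg.2.trans inter_subset_left⟩
  obtain ⟨t, ht⟩ := hKcomp.elim_finite_subcover U hUo hKsub
  refine ⟨insert i₀ t, ?_⟩
  intro x hx
  by_cases hxi : x ∈ U i₀
  · exact mem_biUnion (Finset.mem_insert_self i₀ t) hxi
  · have hxv : x ∉ ⋂₀ f := fun h => hxi (hvsub h)
    obtain ⟨g, hg, hxg⟩ : ∃ g ∈ f, x ∉ g := by
      simpa [mem_sInter] using hxv
    have hbg : b ∈ g := hbv g hg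
    have hxK : x ∈ ⋃ g ∈ f, kset g := by
      rcases (hC g hg).2 with heq | heq
      · exfalso
        apply hxg
        rw [heq] at hbg ⊢
        exact ⟨hx.1, hx.2.trans hbg.2⟩
      · rw [heq] at hbg hxg
        have hxC : (x : Set X) ⊆ C g := by
          simpa [famU] using (not_not.1 hxg).2
        have hbC : ¬ (b : Set X) ⊆ C g := fun h => hbg ⟨b.2, h⟩
        refine mem_biUnion hg ?_
        simp only [hkset, if_neg hbC]
        exact ⟨hx.1, subset_inter hx.2 hxC⟩
    obtain ⟨i, hi, hxi'⟩ := mem_iUnion₂.1 (ht hxK)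
    exact mem_biUnion (Finset.mem_insert_of_mem hi) hxi'
end

section
/- If 𝒜 is a ∩-closed and well-founded family of sets, then X(𝒜) is a locally compact, Hausdorff, scattered space. -/
open Set Topology

section Aux
variable {X : Type*} (𝒜 : Set (Set X))

private def famPre (A : Set X) : Set ↥𝒜 := Subtype.val ⁻¹' {B ∈ 𝒜 | B ⊆ A}

private def famGens : Set (Set ↥𝒜) :=
  {s | ∃ A ∈ 𝒜, s = famPre 𝒜 A ∨ s = (famPre 𝒜 A)ᶜ}

variable {𝒜}

private lemma mem_famPre {A : Set X} {B : ↥𝒜} : B ∈ famPre 𝒜 A ↔ (B : Set X) ⊆ A := by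
  simp [famPre, B.2]

private lemma famTop_eq : famTop 𝒜 = TopologicalSpace.generateFrom (famGens 𝒜) := rfl

private lemma isOpen_famPre {A : Set X} (hA : A ∈ 𝒜) :
    IsOpen[famTop 𝒜] (famPre 𝒜 A) :=
  TopologicalSpace.GenerateOpen.basic _ ⟨A, hA, Or.inl rfl⟩

private lemma isOpen_famPre_compl {A : Set X} (hA : A ∈ 𝒜) :
    IsOpen[famTop 𝒜] (famPre 𝒜 A)ᶜ :=
  TopologicalSpace.GenerateOpen.basic _ ⟨A, hA, Or.inr rfl⟩

private lemma isCompact_famPre (hic : InterClosed 𝒜)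
    (hwf : WellFounded (fun A B : 𝒜 => (A : Set X) ⊂ (B : Set X)))
    {A₀ : Set X} (hA₀ : A₀ ∈ 𝒜) :
    @IsCompact _ (famTop 𝒜) (famPre 𝒜 A₀) := by
  letI := famTop 𝒜
  rw [isCompact_iff_ultrafilter_le_nhds]
  intro f hf
  have hf0 : famPre 𝒜 A₀ ∈ f := Filter.le_principal_iff.mp hf
  by_cases hp : ∃ a : ↥𝒜, {a} ∈ f
  · obtain ⟨a, ha⟩ := hp
    have hle : (f : Filter ↥𝒜) ≤ pure a := by
      simpa [Filter.principal_singleton] using Filter.le_principal_iff.mpr ha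
    have haA : a ∈ famPre 𝒜 A₀ := by
      obtain ⟨b, hb1, hb2⟩ := Filter.nonempty_of_mem (f.inter_mem ha hf0)
      rwa [mem_singleton_iff.mp hb1] at hb2
    exact ⟨a, haA, hle.trans (pure_le_nhds a)⟩
  · push_neg at hp
    set S : Set ↥𝒜 := {A | (A : Set X) ⊆ A₀ ∧ famPre 𝒜 (A : Set X) ∈ f} with hS
    have hSne : S.Nonempty := ⟨⟨A₀, hA₀⟩, subset_rfl, hf0⟩
    obtain ⟨a, haS, hamin⟩ := hwf.has_min S hSne
    refine ⟨a, mem_famPre.mpr haS.1, ?_⟩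
    rw [famTop_eq, TopologicalSpace.nhds_generateFrom]
    refine le_iInf₂ fun s hs => Filter.le_principal_iff.mpr ?_
    obtain ⟨has, C, hC, hsC⟩ := hs
    rcases hsC with rfl | rfl
    · exact Filter.mem_of_superset haS.2 fun b hb =>
        mem_famPre.mpr ((mem_famPre.mp hb).trans (mem_famPre.mp has))
    · rcases f.mem_or_compl_mem (famPre 𝒜 C) with hmem | hmem
      · exfalso
        have hninter : famPre 𝒜 (a : Set X) ∩ famPre 𝒜 C ∈ f := f.inter_mem haS.2 hmem
        have hkey : famPre 𝒜 (a : Set X) ∩ famPre 𝒜 C = famPre 𝒜 ((a : Set X) ∩ C) := by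
          ext b; simp [mem_famPre, subset_inter_iff]
        rw [hkey] at hninter
        have hnaC : ¬ (a : Set X) ⊆ C := fun h => has (mem_famPre.mpr h)
        rcases hic a a.2 C hC with hmem𝒜 | hempty
        · set D : ↥𝒜 := ⟨(a : Set X) ∩ C, hmem𝒜⟩
          have hDS : D ∈ S := ⟨inter_subset_left.trans haS.1, hninter⟩
          refine hamin D hDS ⟨inter_subset_left, fun hle => hnaC ?_⟩
          exact fun x hx => (hle hx).2
        · simp only [mem_singleton_iff] at hempty
          rw [hempty] at hninter
          obtain ⟨b, hb⟩ := Filter.nonempty_of_mem hninter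
          refine hp b (Filter.mem_of_superset hninter fun c hc => ?_)
          have hc' : (c : Set X) = ∅ := subset_empty_iff.mp (mem_famPre.mp hc)
          have hb' : (b : Set X) = ∅ := subset_empty_iff.mp (mem_famPre.mp hb)
          exact Subtype.ext (hc'.trans hb'.symm)
      · exact hmem

end Aux

/-- If `𝒜` is `∩`-closed and well-founded then `X(𝒜)` is locally compact, Hausdorff
and scattered. -/
theorem stmt2 {X : Type*} (𝒜 : Set (Set X)) (hic : InterClosed 𝒜)
    (hwf : WellFounded (fun A B : 𝒜 => (A : Set X) ⊂ (B : Set X))) :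
    @LocallyCompactSpace 𝒜 (famTop 𝒜) ∧ @T2Space 𝒜 (famTop 𝒜) ∧
      @IsScatteredSpace 𝒜 (famTop 𝒜) := by
  letI := famTop 𝒜
  have ht2 : T2Space ↥𝒜 := by
    constructor
    intro a b hab
    rcases (em ((a : Set X) ⊆ (b : Set X))) with h | h
    · have h' : ¬ (b : Set X) ⊆ (a : Set X) := fun h' =>
        hab (Subtype.ext (subset_antisymm h h'))
      exact ⟨famPre 𝒜 (a : Set X), (famPre 𝒜 (a : Set X))ᶜ, isOpen_famPre a.2,
        isOpen_famPre_compl a.2, mem_famPre.mpr subset_rfl,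
        fun hb => h' (mem_famPre.mp hb), disjoint_compl_right⟩
    · exact ⟨(famPre 𝒜 (b : Set X))ᶜ, famPre 𝒜 (b : Set X), isOpen_famPre_compl b.2,
        isOpen_famPre b.2, fun ha => h (mem_famPre.mp ha), mem_famPre.mpr subset_rfl,
        disjoint_compl_left⟩
  have hwlc : WeaklyLocallyCompactSpace ↥𝒜 := by
    constructor
    intro a
    exact ⟨famPre 𝒜 (a : Set X), isCompact_famPre hic hwf a.2,
      (isOpen_famPre a.2).mem_nhds (mem_famPre.mpr subset_rfl)⟩
  refine ⟨inferInstance, ht2, ?_⟩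
  intro S hS
  obtain ⟨a, haS, hamin⟩ := hwf.has_min S hS
  refine ⟨a, haS, famPre 𝒜 (a : Set X), isOpen_famPre a.2, ?_⟩
  ext b
  constructor
  · rintro ⟨hb1, hb2⟩
    by_contra hne
    exact hamin b hb2 ⟨mem_famPre.mp hb1, fun h => hne (by
      exact Subtype.ext (subset_antisymm (mem_famPre.mp hb1) h) )⟩
  · rintro rfl
    exact ⟨mem_famPre.mpr subset_rfl, haS⟩
end

section
/- Let T be a well-ordered set of order type α and let 𝒜 consist of all initial segments of T (including T itself). Then 𝒜 is well-founded and ∩-closed, and the space X(𝒜) is homeomorphic to the ordinal space α+1 (with the order topology). -/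
open Set Topology

/-- For a well-order `T` of type `α`, the family of all initial segments of `T`
is well-founded and `∩`-closed, and `X(𝒜)` is homeomorphic to the ordinal space `α + 1`,
i.e. to the ordinals `≤ α` with the order topology. -/
theorem stmt4 {T : Type u} [LinearOrder T] [WellFoundedLT T]
    (𝒜 : Set (Set T))
    (h𝒜 : 𝒜 = insert Set.univ {S | ∃ x : T, S = Set.Iio x}) :
    WellFounded (fun A B : 𝒜 => (A : Set T) ⊂ (B : Set T)) ∧ InterClosed 𝒜 ∧
      Nonempty (@Homeomorph 𝒜 (Set.Iic (Ordinal.type ((· < ·) : T → T → Prop)))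
        (famTop 𝒜) (Preorder.topology _)) := by
  set α := Ordinal.type ((· < ·) : T → T → Prop) with hα
  set τ : T → Ordinal := fun t => Ordinal.typein ((· < ·) : T → T → Prop) t with hτ
  have hτlt : ∀ t, τ t < α := fun t => Ordinal.typein_lt_type _ t
  have hτiff : ∀ s t : T, τ s < τ t ↔ s < t := fun s t =>
    Ordinal.typein_lt_typein ((· < ·) : T → T → Prop)
  have hτsurj : ∀ o : Ordinal, o < α → ∃ t, τ t = o := by
    intro o h
    exact Ordinal.typein_surj ((· < ·) : T → T → Prop) h
  set g : Iic α → Set T := fun o => {t | τ t < o.val} with hg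
  have hmemg : ∀ o : Iic α, g o ∈ 𝒜 := by
    intro o
    rw [h𝒜]
    rcases eq_or_lt_of_le (mem_Iic.mp o.2) with h | h
    · left
      ext t; simp only [hg, mem_setOf_eq, h, mem_univ, iff_true]
      exact hτlt t
    · right
      obtain ⟨x, hx⟩ := hτsurj _ h
      exact ⟨x, by ext t; simp [hg, ← hx, hτiff]⟩
  set g' : Iic α → 𝒜 := fun o => ⟨g o, hmemg o⟩ with hg'
  have hg'sub : ∀ o o' : Iic α, o ≤ o' → g o ⊆ g o' := by
    intro o o' hle t ht
    simp only [hg, mem_setOf_eq] at ht ⊢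
    exact ht.trans_le (Subtype.coe_le_coe.mpr hle)
  have hsm : StrictMono g' := by
    intro o o' hlt
    refine lt_of_le_of_ne (hg'sub o o' hlt.le) ?_
    intro hEq
    have hEq' : g o = g o' := congrArg Subtype.val hEq
    obtain ⟨x, hx⟩ := hτsurj o.val (lt_of_lt_of_le (Subtype.coe_lt_coe.mpr hlt) (mem_Iic.mp o'.2))
    have hx1 : x ∈ g o' := by
      simp only [hg, mem_setOf_eq, hx]
      exact Subtype.coe_lt_coe.mpr hlt
    rw [← hEq'] at hx1
    simp only [hg, mem_setOf_eq, hx] at hx1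
    exact lt_irrefl _ hx1
  have hsurj : Function.Surjective g' := by
    rintro ⟨A, hA⟩
    rw [h𝒜] at hA
    rcases hA with h | ⟨x, hx⟩
    · refine ⟨⟨α, mem_Iic.mpr le_rfl⟩, ?_⟩
      simp only [hg', Subtype.mk.injEq, hg]
      rw [h]; ext t
      simpa using hτlt t
    · refine ⟨⟨τ x, mem_Iic.mpr (hτlt x).le⟩, ?_⟩
      simp only [hg', Subtype.mk.injEq, hg]
      rw [hx]; ext t
      simpa using hτiff t x
  let e : Iic α ≃o 𝒜 := StrictMono.orderIsoOfSurjective g' hsm hsurj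
  have he : ∀ o, (e o : Set T) = g o := fun o => rfl
  have hlt_wf : WellFounded ((· < ·) : Iic α → Iic α → Prop) := by
    have : ∀ o o' : Iic α, o < o' → (InvImage ((· < ·) : Ordinal → Ordinal → Prop)
        Subtype.val) o o' := fun o o' h => Subtype.coe_lt_coe.mpr h
    exact Subrelation.wf (fun {a b} h => this a b h) (InvImage.wf _ Ordinal.lt_wf)
  refine ⟨?_, ?_, ?_⟩
  · -- well-foundedness
    have key : ∀ A B : 𝒜, (A : Set T) ⊂ (B : Set T) →
        (InvImage ((· < ·) : Iic α → Iic α → Prop) e.symm) A B := by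
      intro A B h
      have : A < B := by
        refine lt_of_le_of_ne h.subset ?_
        intro hEq; exact h.ne (congrArg Subtype.val hEq)
      exact e.symm.strictMono this
    exact Subrelation.wf (fun {a b} h => key a b h) (InvImage.wf _ hlt_wf)
  · -- InterClosed
    intro A hA B hB
    rw [h𝒜] at hA hB ⊢
    rcases hA with rfl | ⟨x, rfl⟩ <;> rcases hB with rfl | ⟨y, rfl⟩
    · exact Or.inl (Or.inl (by simp))
    · exact Or.inl (Or.inr ⟨y, by simp⟩)
    · exact Or.inl (Or.inr ⟨x, by simp⟩)
    · exact Or.inl (Or.inr ⟨min x y, by simp [Set.Iio_inter_Iio]⟩)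
  · -- homeomorphism
    letI t𝒜 : TopologicalSpace 𝒜 := famTop 𝒜
    letI tI : TopologicalSpace (Iic α) := Preorder.topology (Iic α)
    -- basic opens in famTop
    have hUopen : ∀ b : Iic α, IsOpen[famTop 𝒜] {A : 𝒜 | A ≤ e b} ∧
        IsOpen[famTop 𝒜] {A : 𝒜 | A ≤ e b}ᶜ := by
      intro b
      have hset : {A : 𝒜 | A ≤ e b} = (Subtype.val ⁻¹' famU 𝒜 (e b).val : Set 𝒜) := by
        ext A
        simp only [mem_setOf_eq, mem_preimage, famU, Set.mem_setOf_eq]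
        exact ⟨fun h => ⟨A.2, h⟩, fun h => h.2⟩
      constructor
      · rw [hset]
        exact TopologicalSpace.isOpen_generateFrom_of_mem ⟨(e b).val, (e b).2, Or.inl rfl⟩
      · rw [hset]
        exact TopologicalSpace.isOpen_generateFrom_of_mem ⟨(e b).val, (e b).2, Or.inr rfl⟩
    -- Iic open in order topology on Iic α
    have hIicOpen : ∀ b : Iic α, IsOpen[Preorder.topology (Iic α)] (Iic b) := by
      intro b
      rcases eq_or_lt_of_le (mem_Iic.mp b.2) with h | h
      · have huniv : Iic b = univ := by
          ext o; simp only [mem_Iic, mem_univ, iff_true]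
          exact Subtype.coe_le_coe.mp ((mem_Iic.mp o.2).trans_eq h.symm)
        rw [huniv]
        exact TopologicalSpace.isOpen_univ
      · have hb1 : b.val + 1 ≤ α := Order.add_one_le_of_lt h
        set c : Iic α := ⟨b.val + 1, mem_Iic.mpr hb1⟩ with hc
        have : Iic b = Iio c := by
          ext o
          simp only [mem_Iic, mem_Iio, ← Subtype.coe_le_coe, ← Subtype.coe_lt_coe, hc]
          exact ⟨fun h => lt_of_le_of_lt h (lt_add_one _), fun h => Order.le_of_lt_add_one h⟩
        rw [this]
        exact TopologicalSpace.isOpen_generateFrom_of_mem ⟨c, Or.inr rfl⟩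
    have cont1 : Continuous[famTop 𝒜, Preorder.topology (Iic α)] (e.symm : 𝒜 → Iic α) := by
      rw [show Preorder.topology (Iic α) = TopologicalSpace.generateFrom
        {s : Set (Iic α) | ∃ a, s = Ioi a ∨ s = Iio a} from rfl]
      rw [continuous_generateFrom_iff]
      rintro s ⟨b, rfl | rfl⟩
      · have : (e.symm ⁻¹' Ioi b) = {A : 𝒜 | A ≤ e b}ᶜ := by
          ext A
          simp only [mem_preimage, mem_Ioi, mem_compl_iff, mem_setOf_eq]
          rw [← e.symm.le_iff_le, e.symm_apply_apply, not_le]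
        rw [this]; exact (hUopen b).2
      · have : (e.symm ⁻¹' Iio b) = ⋃ c : Iic α, ⋃ _ : c < b, {A : 𝒜 | A ≤ e c} := by
          ext A
          simp only [mem_preimage, mem_Iio, mem_iUnion, mem_setOf_eq]
          constructor
          · intro h
            exact ⟨e.symm A, h, by rw [e.apply_symm_apply]⟩
          · rintro ⟨c, hc, hA⟩
            calc e.symm A ≤ e.symm (e c) := e.symm.monotone hA
              _ = c := e.symm_apply_apply c
              _ < b := hc
        rw [this]
        exact isOpen_iUnion fun c => isOpen_iUnion fun _ => (hUopen c).1
    have cont2 : Continuous[Preorder.topology (Iic α), famTop 𝒜] (e : Iic α → 𝒜) := by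
      rw [show famTop 𝒜 = TopologicalSpace.generateFrom _ from rfl]
      rw [continuous_generateFrom_iff]
      rintro s ⟨A, hA, rfl | rfl⟩
      · have : ((e : Iic α → 𝒜) ⁻¹' (Subtype.val ⁻¹' famU 𝒜 A)) = Iic (e.symm ⟨A, hA⟩) := by
          ext o
          simp only [mem_preimage, famU, Set.mem_setOf_eq, mem_Iic]
          constructor
          · intro h
            rw [← e.symm_apply_apply o]
            exact e.symm.monotone (show e o ≤ (⟨A, hA⟩ : 𝒜) from h.2)
          · intro h
            have : e o ≤ (⟨A, hA⟩ : 𝒜) := by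
              have := e.monotone h
              rwa [e.apply_symm_apply] at this
            exact ⟨(e o).2, this⟩
        rw [this]; exact hIicOpen _
      · rw [preimage_compl]
        have : ((e : Iic α → 𝒜) ⁻¹' (Subtype.val ⁻¹' famU 𝒜 A)) = Iic (e.symm ⟨A, hA⟩) := by
          ext o
          simp only [mem_preimage, famU, Set.mem_setOf_eq, mem_Iic]
          constructor
          · intro h
            rw [← e.symm_apply_apply o]
            exact e.symm.monotone (show e o ≤ (⟨A, hA⟩ : 𝒜) from h.2)
          · intro h
            have : e o ≤ (⟨A, hA⟩ : 𝒜) := by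
              have := e.monotone h
              rwa [e.apply_symm_apply] at this
            exact ⟨(e o).2, this⟩
        rw [this]
        have : (Iic (e.symm ⟨A, hA⟩))ᶜ = Ioi (e.symm ⟨A, hA⟩) := by
          ext o; simp [not_le]
        rw [this]
        exact TopologicalSpace.isOpen_generateFrom_of_mem ⟨_, Or.inl rfl⟩
    exact ⟨@Homeomorph.mk _ _ (famTop 𝒜) (Preorder.topology _) e.symm.toEquiv cont1 cont2⟩
end

section
/- If 𝒜 is well-founded, ∩-closed and rk-good, then for every ordinal α the α-th Cantor–Bendixson level of X(𝒜) equals the set of A ∈ 𝒜 of rank α with respect to ⊊. -/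
open Set Topology

/-- If `𝒜` is well-founded, `∩`-closed and rk-good, then for every ordinal `α` the `α`-th
Cantor–Bendixson level of `X(𝒜)` is exactly the set of members of `𝒜` of rank `α`. -/
theorem stmt5 {X : Type u} (𝒜 : Set (Set X))
    (hwf : WellFounded (fun A B : 𝒜 => (A : Set X) ⊂ (B : Set X)))
    (hic : InterClosed 𝒜)
    (hgood : ∀ A : 𝒜, ∀ α < (hwf.apply A).rank,
      {A' : 𝒜 | (A' : Set X) ⊆ (A : Set X) ∧ (hwf.apply A').rank = α}.Infinite)
    (α : Ordinal.{u}) :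
    @cbLevel 𝒜 (famTop 𝒜) α = {A : 𝒜 | (hwf.apply A).rank = α} := by
  letI : TopologicalSpace 𝒜 := famTop 𝒜
  -- rank decreases along ⊊
  have hrk : ∀ B A : 𝒜, (B : Set X) ⊂ (A : Set X) →
      (hwf.apply B).rank < (hwf.apply A).rank := by
    intro B A h
    have := Acc.rank_lt_of_rel (hwf.apply A) (a := B) h
    simpa using this
  induction α using Ordinal.induction with
  | h α IH =>
  have hS : {y : 𝒜 | ∀ p, p < α → y ∉ cbLevel 𝒜 p} =
      {A : 𝒜 | α ≤ (hwf.apply A).rank} := by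
    ext A
    simp only [mem_setOf_eq]
    constructor
    · intro h
      by_contra hlt
      push_neg at hlt
      exact h _ hlt (by rw [IH _ hlt]; exact rfl)
    · intro hle p hp hmem
      rw [IH p hp] at hmem
      exact absurd (hmem ▸ hp) (not_lt.2 hle)
  rw [cbLevel]
  ext A
  simp only [mem_setOf_eq]
  have hmemS : (∀ p, p < α → A ∉ cbLevel 𝒜 p) ↔ α ≤ (hwf.apply A).rank := by
    constructor
    · intro h; exact hS.subset h
    · intro h; exact hS.symm.subset h
  constructor
  · rintro ⟨h1, t, ht, hts⟩
    have hle : α ≤ (hwf.apply A).rank := hmemS.1 h1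
    rcases eq_or_lt_of_le hle with heq | hlt
    · exact heq.symm
    · -- non-isolation: derive contradiction
      exfalso
      rw [hS] at hts
      have hAt : A ∈ t := by
        have : A ∈ ({A} : Set 𝒜) := rfl
        rw [← hts] at this; exact this.1
      -- get a basic open set
      set 𝔅 : Set (Set 𝒜) := {s | ∃ C ∈ 𝒜, s = (Subtype.val ⁻¹' famU 𝒜 C : Set 𝒜) ∨
        s = ((Subtype.val ⁻¹' famU 𝒜 C)ᶜ : Set 𝒜)} with h𝔅
      have hbasis := TopologicalSpace.isTopologicalBasis_of_subbasis
        (t := famTop 𝒜) (s := 𝔅) rfl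
      obtain ⟨v, ⟨F, ⟨hFfin, hFsub⟩, rfl⟩, hAv, hvt⟩ :=
        hbasis.exists_subset_of_mem_open hAt ht
      -- the finite collection of "forbidden" intersections
      set 𝒟 : Set 𝒜 := {D | ∃ C ∈ 𝒜,
        ((Subtype.val ⁻¹' famU 𝒜 C)ᶜ : Set 𝒜) ∈ F ∧ (D : Set X) = (A : Set X) ∩ C} with h𝒟
      have hDsub : ∀ D ∈ 𝒟, (D : Set X) ⊂ (A : Set X) := by
        rintro D ⟨C, hC, hsF, hD⟩
        have hnsub : ¬ ((A : Set X) ⊆ C) := by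
          have := hAv _ hsF
          simp only [mem_compl_iff, mem_preimage, famU, mem_setOf_eq] at this
          intro hsub; exact this ⟨A.2, hsub⟩
        rw [hD]
        constructor
        · exact inter_subset_left
        · intro hle'
          exact hnsub (fun x hx => (hle' hx).2)
      -- 𝒟 is finite
      have hDfin : 𝒟.Finite := by
        have key : ∀ D₁ ∈ 𝒟, ∀ D₂ ∈ 𝒟, ∀ C₁ ∈ 𝒜, ∀ C₂ ∈ 𝒜,
            (Subtype.val ⁻¹' famU 𝒜 C₁ : Set 𝒜) = (Subtype.val ⁻¹' famU 𝒜 C₂ : Set 𝒜) →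
            (D₁ : Set X) = (A : Set X) ∩ C₁ → (D₂ : Set X) = (A : Set X) ∩ C₂ →
            D₁ = D₂ := by
          intro D₁ _ D₂ _ C₁ hC₁ C₂ hC₂ hUU hD₁ hD₂
          have h12 : ∀ D : 𝒜, (D : Set X) ⊆ C₁ → (D : Set X) ⊆ C₂ := by
            intro D hD
            have : D ∈ (Subtype.val ⁻¹' famU 𝒜 C₁ : Set 𝒜) := ⟨D.2, hD⟩
            rw [hUU] at this; exact this.2
          have h21 : ∀ D : 𝒜, (D : Set X) ⊆ C₂ → (D : Set X) ⊆ C₁ := by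
            intro D hD
            have : D ∈ (Subtype.val ⁻¹' famU 𝒜 C₂ : Set 𝒜) := ⟨D.2, hD⟩
            rw [← hUU] at this; exact this.2
          apply Subtype.ext
          rw [hD₁, hD₂]
          apply subset_antisymm
          · have := h12 D₁ (hD₁ ▸ inter_subset_right)
            rw [hD₁] at this
            exact subset_inter inter_subset_left this
          · have := h21 D₂ (hD₂ ▸ inter_subset_right)
            rw [hD₂] at this
            exact subset_inter inter_subset_left this
        classical
        set f : 𝒜 → Set 𝒜 := fun D =>
          if h : ∃ C, C ∈ 𝒜 ∧ ((Subtype.val ⁻¹' famU 𝒜 C)ᶜ : Set 𝒜) ∈ F ∧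
              (D : Set X) = (A : Set X) ∩ C
          then ((Subtype.val ⁻¹' famU 𝒜 h.choose)ᶜ : Set 𝒜) else ∅ with hf
        apply Set.Finite.of_finite_image (f := f)
        · apply hFfin.subset
          rintro _ ⟨D, hD, rfl⟩
          obtain ⟨C, hC, hsF, hDe⟩ := hD
          have hex : ∃ C, C ∈ 𝒜 ∧ ((Subtype.val ⁻¹' famU 𝒜 C)ᶜ : Set 𝒜) ∈ F ∧
              (D : Set X) = (A : Set X) ∩ C := ⟨C, hC, hsF, hDe⟩
          rw [hf]; simp only [hex, dif_pos]
          exact hex.choose_spec.2.1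
        · intro D₁ hD₁ D₂ hD₂ hfeq
          obtain ⟨C₁, hC₁, hsF₁, hDe₁⟩ := hD₁
          obtain ⟨C₂, hC₂, hsF₂, hDe₂⟩ := hD₂
          have hex₁ : ∃ C, C ∈ 𝒜 ∧ ((Subtype.val ⁻¹' famU 𝒜 C)ᶜ : Set 𝒜) ∈ F ∧
              (D₁ : Set X) = (A : Set X) ∩ C := ⟨C₁, hC₁, hsF₁, hDe₁⟩
          have hex₂ : ∃ C, C ∈ 𝒜 ∧ ((Subtype.val ⁻¹' famU 𝒜 C)ᶜ : Set 𝒜) ∈ F ∧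
              (D₂ : Set X) = (A : Set X) ∩ C := ⟨C₂, hC₂, hsF₂, hDe₂⟩
          rw [hf] at hfeq
          simp only [hex₁, hex₂, dif_pos] at hfeq
          have hUU : (Subtype.val ⁻¹' famU 𝒜 hex₁.choose : Set 𝒜) =
              (Subtype.val ⁻¹' famU 𝒜 hex₂.choose : Set 𝒜) :=
            compl_injective hfeq
          exact key D₁ ⟨C₁, hC₁, hsF₁, hDe₁⟩ D₂ ⟨C₂, hC₂, hsF₂, hDe₂⟩
            hex₁.choose hex₁.choose_spec.1 hex₂.choose hex₂.choose_spec.1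
            hUU hex₁.choose_spec.2.2 hex₂.choose_spec.2.2
      -- the ordinal β
      set E : Set Ordinal.{u} := insert α ((fun D : 𝒜 => (hwf.apply D).rank) '' 𝒟) with hE
      have hEfin : E.Finite := (hDfin.image _).insert α
      have hEne : E.Nonempty := ⟨α, mem_insert _ _⟩
      have hElt : ∀ b ∈ E, b < (hwf.apply A).rank := by
        rintro b (rfl | ⟨D, hD, rfl⟩)
        · exact hlt
        · exact hrk D A (hDsub D hD)
      set β : Ordinal.{u} := sSup E with hβdef
      have hβlt : β < (hwf.apply A).rank := hElt _ (hEne.csSup_mem hEfin)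
      have hαβ : α ≤ β := le_csSup hEfin.bddAbove (mem_insert _ _)
      have hβD : ∀ D ∈ 𝒟, (hwf.apply D).rank ≤ β := fun D hD =>
        le_csSup hEfin.bddAbove (mem_insert_of_mem _ ⟨D, hD, rfl⟩)
      -- find a point of rank β in the basic open set, distinct from A
      have hinf := hgood A β hβlt
      have hbad : (𝒟 ∪ {D : 𝒜 | (D : Set X) = ∅}).Finite := by
        apply hDfin.union
        apply Set.Subsingleton.finite
        intro D₁ h₁ D₂ h₂
        exact Subtype.ext (h₁.trans h₂.symm)
      obtain ⟨A', hA'G, hA'bad⟩ := (hinf.diff hbad).nonempty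
      obtain ⟨hA'A, hA'rk⟩ := hA'G
      have hA'D : A' ∉ 𝒟 := fun h => hA'bad (Or.inl h)
      have hA'ne : (A' : Set X) ≠ ∅ := fun h => hA'bad (Or.inr h)
      -- A' belongs to the basic open set
      have hA'v : A' ∈ ⋂₀ F := by
        intro s hs
        obtain ⟨C, hC, hcase | hcase⟩ := hFsub hs
        · subst hcase
          have hAC : (A : Set X) ⊆ C := (hAv _ hs).2
          exact ⟨A'.2, hA'A.trans hAC⟩
        · subst hcase
          simp only [mem_compl_iff, mem_preimage]
          rintro ⟨-, hA'C⟩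
          rcases hic A.1 A.2 C hC with hACmem | hACempty
          · set D : 𝒜 := ⟨(A : Set X) ∩ C, hACmem⟩ with hD
            have hDmem : D ∈ 𝒟 := ⟨C, hC, hs, rfl⟩
            have hsub : (A' : Set X) ⊆ (D : Set X) := subset_inter hA'A hA'C
            rcases eq_or_ssubset_of_subset hsub with heq | hss
            · exact hA'D (Subtype.ext heq ▸ hDmem)
            · have := hrk A' D hss
              rw [hA'rk] at this
              exact absurd (this.trans_le (hβD D hDmem)) (lt_irrefl β)
          · simp only [mem_singleton_iff] at hACempty
            apply hA'ne
            have : (A' : Set X) ⊆ (A : Set X) ∩ C := subset_inter hA'A hA'C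
            rw [hACempty] at this
            exact subset_empty_iff.1 this
      -- contradiction
      have hA'tS : A' ∈ t ∩ {B : 𝒜 | α ≤ (hwf.apply B).rank} :=
        ⟨hvt hA'v, by rw [mem_setOf_eq, hA'rk]; exact hαβ⟩
      rw [hts, mem_singleton_iff] at hA'tS
      rw [hA'tS] at hA'rk
      exact absurd (hA'rk ▸ hβlt) (lt_irrefl _)
  · intro hr
    refine ⟨hmemS.2 (le_of_eq hr.symm), (Subtype.val ⁻¹' famU 𝒜 A : Set 𝒜), ?_, ?_⟩
    · exact TopologicalSpace.isOpen_generateFrom_of_mem ⟨A.1, A.2, Or.inl rfl⟩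
    · rw [hS]
      ext B
      simp only [mem_inter_iff, mem_preimage, mem_setOf_eq, mem_singleton_iff, famU]
      constructor
      · rintro ⟨⟨-, hBA⟩, hBr⟩
        by_contra hne
        have hss : (B : Set X) ⊂ (A : Set X) :=
          hBA.ssubset_of_ne (fun h => hne (Subtype.ext h))
        have := hrk B A hss
        rw [hr] at this
        exact absurd (this.trans_le hBr) (lt_irrefl _)
      · rintro rfl
        exact ⟨⟨B.2, subset_rfl⟩, le_of_eq hr.symm⟩
end

section
/- If 𝒜 is a well-founded, ∩-closed family and A ∈ 𝒜 lies in the α-th Cantor–Bendixson level of X(𝒜), then α ≤ rk(A). -/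
open Set Topology

/-- If `𝒜` is well-founded and `∩`-closed and `A` lies on the `α`-th Cantor–Bendixson level
of `X(𝒜)`, then `α ≤ rk(A)`. -/
theorem stmt6 {X : Type u} (𝒜 : Set (Set X))
    (hwf : WellFounded (fun A B : 𝒜 => (A : Set X) ⊂ (B : Set X)))
    (hic : InterClosed 𝒜) (α : Ordinal.{u}) (A : 𝒜)
    (hA : A ∈ @cbLevel 𝒜 (famTop 𝒜) α) :
    α ≤ (hwf.apply A).rank := by
  letI : TopologicalSpace 𝒜 := famTop 𝒜
  suffices h : ∀ p : Ordinal.{u}, ∀ B : 𝒜, (∀ q, q < p → B ∉ cbLevel 𝒜 q) →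
      p ≤ (hwf.apply B).rank by
    refine h α A ?_
    rw [cbLevel] at hA
    exact fun q hq => hA.1 q hq
  intro p
  induction p using Ordinal.induction with
  | _ p IH =>
    intro B hB
    by_contra hcon
    push_neg at hcon
    obtain ⟨q, hq⟩ : ∃ q, q < p ∧ (hwf.apply B).rank ≤ q := ⟨(hwf.apply B).rank, hcon, le_rfl⟩
    have hBq : B ∉ cbLevel 𝒜 q := hB q hq.1
    have hBR : ∀ r, r < q → B ∉ cbLevel 𝒜 r := fun r hr => hB r (hr.trans hq.1)
    rw [cbLevel] at hBq
    simp only [Set.mem_setOf_eq, not_and] at hBq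
    have hne := hBq hBR
    push_neg at hne
    set t : Set 𝒜 := Subtype.val ⁻¹' famU 𝒜 B with ht
    have hto : IsOpen t := TopologicalSpace.GenerateOpen.basic _ ⟨B, B.2, Or.inl rfl⟩
    have hneq := hne t hto
    have hsub : {B} ⊆ t ∩ {y : 𝒜 | ∀ r, r < q → y ∉ cbLevel 𝒜 r} :=
      Set.singleton_subset_iff.mpr ⟨⟨B.2, subset_rfl⟩, hBR⟩
    obtain ⟨C, hC, hCne⟩ := Set.exists_of_ssubset (hsub.ssubset_of_ne (Ne.symm hneq))
    have hCB : (C : Set X) ⊂ (B : Set X) := by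
      refine ⟨hC.1.2, fun h => hCne ?_⟩
      simp only [Set.mem_singleton_iff]
      exact Subtype.ext (subset_antisymm hC.1.2 h)
    have h1 : (hwf.apply C).rank < (hwf.apply B).rank := Acc.rank_lt_of_rel (hwf.apply B) hCB
    have h2 : q ≤ (hwf.apply C).rank := IH q hq.1 C hC.2
    exact absurd (h2.trans_lt h1) (not_lt.mpr hq.2)
end

section
/- Let κ be a cardinal and {𝒜ᵢ : i ∈ I} ⊆ 𝒫(𝒫(κ)) be ∩-closed families with κ+1 ⊆ 𝒜ᵢ for each i (ordinals identified with sets of predecessors), such that Δ(𝒜ᵢ,𝒜ⱼ) is a successor ordinal for all i ≠ j. Then the system of amalgamated families {𝒜ᵢ^am : i ∈ I} is coherent, where 𝒜ᵢ^am = { {U_{𝒜ᵢ}(η+1) : η ∈ A} : A ∈ 𝒜ᵢ }. -/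
open Set Topology

/-!
Below `Δ(𝒜ᵢ, 𝒜ⱼ) = β + 1` the traces of the two families agree, and since both are `∩`-closed
and contain every `Iio δ`, the trace at `δ` is just `U(δ)`; hence `U_{𝒜ᵢ}(δ) = U_{𝒜ⱼ}(δ)`
exactly for `δ ≤ β`. As `Iio (η + 1)` is the largest member of `U(η + 1)`, an equality
`k_{𝒜ᵢ}(η) = k_{𝒜ⱼ}(ξ)` forces `η = ξ < β`, so `k_{𝒜ᵢ}''A ∩ k_{𝒜ⱼ}''B = k_{𝒜ᵢ}''(A ∩ B ∩ β)`.
Because `Δ` is a successor, `β < Δ`, so `B ∩ β` is also a trace of `𝒜ᵢ` at `β`, i.e. a member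
of `𝒜ᵢ`, and `∩`-closure of `𝒜ᵢ` finishes the proof.
-/

section Traces

variable {X : Type*}

lemma image_inter_eq_famU {𝒜 : Set (Set X)} (hic : InterClosed 𝒜) (hempty : ∅ ∈ 𝒜)
    {C : Set X} (hC : C ∈ 𝒜) : (· ∩ C) '' 𝒜 = famU 𝒜 C := by
  ext D
  constructor
  · rintro ⟨A, hA, rfl⟩
    refine ⟨show A ∩ C ∈ 𝒜 from ?_, inter_subset_right⟩
    obtain h | h : A ∩ C ∈ 𝒜 ∨ A ∩ C = ∅ := hic A hA C hC
    · exact h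
    · exact h ▸ hempty
  · rintro ⟨hD, hDC⟩
    exact ⟨D, hD, inter_eq_left.mpr hDC⟩

lemma image_inter_image_inter_of_subset (𝒜 : Set (Set X)) {C C' : Set X} (h : C ⊆ C') :
    (· ∩ C) '' ((· ∩ C') '' 𝒜) = (· ∩ C) '' 𝒜 := by
  rw [image_image]
  refine image_congr fun A _ => ?_
  rw [inter_assoc, inter_eq_right.mpr h]

lemma image_inter_eq_self {𝒜 : Set (Set X)} {C : Set X} (h : ∀ A ∈ 𝒜, A ⊆ C) :
    (· ∩ C) '' 𝒜 = 𝒜 := by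
  conv_rhs => rw [← image_id 𝒜]
  exact image_congr fun A hA => inter_eq_left.mpr (h A hA)

lemma eq_of_famU_eq {𝒜 ℬ : Set (Set X)} {C C' : Set X} (hC : C ∈ 𝒜) (hC' : C' ∈ ℬ)
    (h : famU 𝒜 C = famU ℬ C') : C = C' :=
  have hCℬ : C ∈ famU ℬ C' := h ▸ ⟨hC, subset_rfl⟩
  have hC'𝒜 : C' ∈ famU 𝒜 C := h ▸ ⟨hC', subset_rfl⟩
  hCℬ.2.antisymm hC'𝒜.2

end Traces

section Ordinals

variable {𝒜 ℬ : Set (Set Ordinal.{u})} {θ δ : Ordinal.{u}}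

/-- The paper's `Δ(𝒜, ℬ)`; it is `0` (the `sInf ∅` junk value) when `𝒜 = ℬ`. -/
noncomputable def famDelta (𝒜 ℬ : Set (Set Ordinal.{u})) : Ordinal.{u} :=
  sInf {δ | (· ∩ Iio δ) '' 𝒜 ≠ (· ∩ Iio δ) '' ℬ}

lemma famDelta_self (𝒜 : Set (Set Ordinal.{u})) : famDelta 𝒜 𝒜 = 0 := by
  simp [famDelta]

lemma image_inter_Iio_eq_of_lt_famDelta (h : δ < famDelta 𝒜 ℬ) :
    (· ∩ Iio δ) '' 𝒜 = (· ∩ Iio δ) '' ℬ :=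
  not_not.mp (notMem_of_lt_csInf h (OrderBot.bddBelow _))

lemma image_inter_Iio_ne_of_famDelta_le (hΔ : famDelta 𝒜 ℬ ≠ 0) (h : famDelta 𝒜 ℬ ≤ δ) :
    (· ∩ Iio δ) '' 𝒜 ≠ (· ∩ Iio δ) '' ℬ := by
  have hne : {δ | (· ∩ Iio δ) '' 𝒜 ≠ (· ∩ Iio δ) '' ℬ}.Nonempty :=
    nonempty_iff_ne_empty.mpr fun hempty => hΔ (by rw [famDelta, hempty, Ordinal.sInf_empty])
  intro hδ
  have hmem : famDelta 𝒜 ℬ ∈ {δ | (· ∩ Iio δ) '' 𝒜 ≠ (· ∩ Iio δ) '' ℬ} := csInf_mem hne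
  apply hmem
  rw [← image_inter_image_inter_of_subset 𝒜 (Iio_subset_Iio h),
    ← image_inter_image_inter_of_subset ℬ (Iio_subset_Iio h), hδ]

lemma famDelta_le (hsub𝒜 : ∀ A ∈ 𝒜, A ⊆ Iio θ) (hsubℬ : ∀ B ∈ ℬ, B ⊆ Iio θ)
    (hΔ : famDelta 𝒜 ℬ ≠ 0) : famDelta 𝒜 ℬ ≤ θ := by
  by_contra! h
  have hθ := image_inter_Iio_eq_of_lt_famDelta h
  rw [image_inter_eq_self hsub𝒜, image_inter_eq_self hsubℬ] at hθ
  exact hΔ (hθ ▸ famDelta_self ℬ)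

lemma image_inter_Iio_eq_famU (hic : InterClosed 𝒜) (hini : ∀ η ≤ θ, Iio η ∈ 𝒜) (hδ : δ ≤ θ) :
    (· ∩ Iio δ) '' 𝒜 = famU 𝒜 (Iio δ) := by
  have hempty : ∅ ∈ 𝒜 := by simpa using hini 0 zero_le
  exact image_inter_eq_famU hic hempty (hini δ hδ)

lemma famU_Iio_eq_iff_lt_famDelta (hic𝒜 : InterClosed 𝒜) (hicℬ : InterClosed ℬ)
    (hini𝒜 : ∀ η ≤ θ, Iio η ∈ 𝒜) (hiniℬ : ∀ η ≤ θ, Iio η ∈ ℬ) (hΔ : famDelta 𝒜 ℬ ≠ 0)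
    (hδ : δ ≤ θ) : famU 𝒜 (Iio δ) = famU ℬ (Iio δ) ↔ δ < famDelta 𝒜 ℬ := by
  rw [← image_inter_Iio_eq_famU hic𝒜 hini𝒜 hδ, ← image_inter_Iio_eq_famU hicℬ hiniℬ hδ]
  refine ⟨fun h => ?_, image_inter_Iio_eq_of_lt_famDelta⟩
  by_contra! hle
  exact image_inter_Iio_ne_of_famDelta_le hΔ hle h

/-- The paper's `k_𝒜(η) = U_𝒜(η + 1)`. -/
def amalgMap (𝒜 : Set (Set Ordinal.{u})) (η : Ordinal.{u}) : Set (Set Ordinal.{u}) :=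
  famU 𝒜 (Iio (η + 1))

lemma amalgMap_eq_amalgMap_iff (hic𝒜 : InterClosed 𝒜) (hicℬ : InterClosed ℬ)
    (hini𝒜 : ∀ η ≤ θ, Iio η ∈ 𝒜) (hiniℬ : ∀ η ≤ θ, Iio η ∈ ℬ) {β η ξ : Ordinal.{u}}
    (hβ : famDelta 𝒜 ℬ = β + 1) (hη : η < θ) (hξ : ξ < θ) :
    amalgMap 𝒜 η = amalgMap ℬ ξ ↔ η = ξ ∧ η < β := by
  have hΔ : famDelta 𝒜 ℬ ≠ 0 := hβ ▸ (zero_le.trans_lt (lt_add_one β)).ne'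
  have hη' := Order.add_one_le_of_lt hη
  constructor
  · intro h
    have hIio := eq_of_famU_eq (hini𝒜 _ hη') (hiniℬ _ (Order.add_one_le_of_lt hξ)) h
    obtain rfl : η = ξ := Order.add_one_inj.mp
      ((Iio_subset_Iio_iff.mp hIio.le).antisymm (Iio_subset_Iio_iff.mp hIio.ge))
    refine ⟨rfl, ?_⟩
    have hlt := (famU_Iio_eq_iff_lt_famDelta hic𝒜 hicℬ hini𝒜 hiniℬ hΔ hη').mp h
    rwa [hβ, Order.lt_add_one_iff, Order.add_one_le_iff] at hlt
  · rintro ⟨rfl, hηβ⟩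
    refine (famU_Iio_eq_iff_lt_famDelta hic𝒜 hicℬ hini𝒜 hiniℬ hΔ hη').mpr ?_
    rwa [hβ, Order.lt_add_one_iff, Order.add_one_le_iff]

lemma inter_Iio_mem_of_famDelta_eq_add_one (hic : InterClosed 𝒜) (hini : ∀ η ≤ θ, Iio η ∈ 𝒜)
    {β : Ordinal.{u}} (hβ : famDelta 𝒜 ℬ = β + 1) (hβθ : β ≤ θ) {B : Set Ordinal.{u}}
    (hB : B ∈ ℬ) : B ∩ Iio β ∈ 𝒜 := by
  have hagree := image_inter_Iio_eq_of_lt_famDelta (hβ ▸ lt_add_one β : β < famDelta 𝒜 ℬ)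
  rw [image_inter_Iio_eq_famU hic hini hβθ] at hagree
  exact (hagree ▸ mem_image_of_mem _ hB : B ∩ Iio β ∈ famU 𝒜 (Iio β)).1

lemma image_amalgMap_inter_image_amalgMap (hic𝒜 : InterClosed 𝒜) (hicℬ : InterClosed ℬ)
    (hini𝒜 : ∀ η ≤ θ, Iio η ∈ 𝒜) (hiniℬ : ∀ η ≤ θ, Iio η ∈ ℬ) {β : Ordinal.{u}}
    (hβ : famDelta 𝒜 ℬ = β + 1) {A B : Set Ordinal.{u}} (hA : A ⊆ Iio θ) (hB : B ⊆ Iio θ) :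
    amalgMap 𝒜 '' A ∩ amalgMap ℬ '' B = amalgMap 𝒜 '' (A ∩ (B ∩ Iio β)) := by
  ext S
  constructor
  · rintro ⟨⟨η, hηA, rfl⟩, ξ, hξB, hξη⟩
    obtain ⟨rfl, hηβ⟩ := (amalgMap_eq_amalgMap_iff hic𝒜 hicℬ hini𝒜 hiniℬ hβ (hA hηA)
      (hB hξB)).mp hξη.symm
    exact ⟨η, ⟨hηA, hξB, hηβ⟩, rfl⟩
  · rintro ⟨η, ⟨hηA, hηB, hηβ⟩, rfl⟩
    have hη := hA hηA
    exact ⟨⟨η, hηA, rfl⟩, η, hηB,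
      ((amalgMap_eq_amalgMap_iff hic𝒜 hicℬ hini𝒜 hiniℬ hβ hη hη).mpr ⟨rfl, hηβ⟩).symm⟩

end Ordinals

/-- Amalgamation: if the `𝒜ᵢ ⊆ 𝒫(κ)` are `∩`-closed families containing all ordinals `≤ κ`
and `Δ(𝒜ᵢ, 𝒜ⱼ)` is a successor for `i ≠ j`, then the amalgamated system
`𝒜ᵢᵃᵐ = {k_{𝒜ᵢ}''A : A ∈ 𝒜ᵢ}`, `k_{𝒜ᵢ}(η) = U_{𝒜ᵢ}(η+1)`, is coherent. -/
theorem stmt9 {I : Type*} (κ : Cardinal.{0}) (𝒜 : I → Set (Set Ordinal.{0}))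
    (hsub : ∀ i, ∀ A ∈ 𝒜 i, A ⊆ Set.Iio κ.ord)
    (hic : ∀ i, InterClosed (𝒜 i))
    (hini : ∀ i, ∀ η ≤ κ.ord, Set.Iio η ∈ 𝒜 i)
    (hΔ : ∀ i j, i ≠ j →
      ∃ β : Ordinal,
        sInf {δ : Ordinal |
            (fun A => A ∩ Set.Iio δ) '' 𝒜 i ≠ (fun A => A ∩ Set.Iio δ) '' 𝒜 j} = β + 1) :
    ∀ i j, i ≠ j →
      ∀ S ∈ (fun A => (fun η => famU (𝒜 i) (Set.Iio (η + 1))) '' A) '' 𝒜 i,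
      ∀ T ∈ (fun A => (fun η => famU (𝒜 j) (Set.Iio (η + 1))) '' A) '' 𝒜 j,
        S ∩ T ∈ ((fun A => (fun η => famU (𝒜 i) (Set.Iio (η + 1))) '' A) '' 𝒜 i)
          ∪ {(∅ : Set (Set (Set Ordinal.{0})))} := by
  rintro i j hij _ ⟨A, hA, rfl⟩ _ ⟨B, hB, rfl⟩
  obtain ⟨β, hβ⟩ := hΔ i j hij
  change famDelta (𝒜 i) (𝒜 j) = β + 1 at hβ
  have hβκ : β + 1 ≤ κ.ord :=
    hβ ▸ famDelta_le (hsub i) (hsub j) (hβ ▸ (zero_le.trans_lt (lt_add_one β)).ne')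
  have hBβ := inter_Iio_mem_of_famDelta_eq_add_one (hic i) (hini i) hβ
    ((lt_add_one β).le.trans hβκ) hB
  change amalgMap (𝒜 i) '' A ∩ amalgMap (𝒜 j) '' B ∈ (amalgMap (𝒜 i) '' ·) '' 𝒜 i ∪ {∅}
  rw [image_amalgMap_inter_image_amalgMap (hic i) (hic j) (hini i) (hini j) hβ (hsub i A hA)
    (hsub j B hB)]
  obtain h | h : A ∩ (B ∩ Iio β) ∈ 𝒜 i ∨ A ∩ (B ∩ Iio β) = ∅ := hic i A hA _ hBβ
  · exact Or.inl (mem_image_of_mem _ h)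
  · exact Or.inr (by rw [h, image_empty]; rfl)
end

section
/- Let δ be an infinite ordinal and 𝒜 ⊆ 𝒫(δ) a tree-like, well-founded, chain-closed family with δ ∈ 𝒜. Then every non-empty member of 𝒜 is either δ or of the form S(α,β) = ⋃{A ∈ 𝒜 : α ∈ A and β ∉ A} for some α,β ∈ δ, and conversely each non-empty such S(α,β) belongs to 𝒜. Consequently |𝒜| ≤ |δ|. -/
open Set Topology

/-- For an infinite ordinal `δ` and a tree-like, well-founded, chain-closed family
`𝒜 ⊆ 𝒫(δ)` with `δ ∈ 𝒜`: the nonempty members of `𝒜` are exactly `δ` together with the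
nonempty sets `S(α,β) = ⋃{A ∈ 𝒜 : α ∈ A, β ∉ A}`, `α, β < δ`; consequently `|𝒜| ≤ |δ|`. -/
theorem stmt12 (δ : Ordinal.{0}) (hδ : Ordinal.omega0 ≤ δ) (𝒜 : Set (Set Ordinal.{0}))
    (hsub : ∀ A ∈ 𝒜, A ⊆ Set.Iio δ)
    (htree : TreeLike 𝒜)
    (hwf : WellFounded (fun A B : 𝒜 => (A : Set Ordinal) ⊂ (B : Set Ordinal)))
    (hcc : ChainClosed 𝒜) (hδA : Set.Iio δ ∈ 𝒜) :
    (∀ A ∈ 𝒜, A.Nonempty → A = Set.Iio δ ∨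
      ∃ α < δ, ∃ β < δ, A = ⋃₀ {B ∈ 𝒜 | α ∈ B ∧ β ∉ B}) ∧
    (∀ α < δ, ∀ β < δ, (⋃₀ {B ∈ 𝒜 | α ∈ B ∧ β ∉ B}).Nonempty →
      ⋃₀ {B ∈ 𝒜 | α ∈ B ∧ β ∉ B} ∈ 𝒜) ∧
    Cardinal.mk 𝒜 ≤ Cardinal.lift.{1} δ.card := by
  have key : ∀ A ∈ 𝒜, A.Nonempty → A = Set.Iio δ ∨
      ∃ α < δ, ∃ β < δ, A = ⋃₀ {B ∈ 𝒜 | α ∈ B ∧ β ∉ B} := by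
    intro A hA hAne
    by_cases hAδ : A = Set.Iio δ
    · exact Or.inl hAδ
    right
    obtain ⟨α, hα⟩ := hAne
    have hαδ : α < δ := hsub A hA hα
    -- minimal strict superset of A in 𝒜
    have hne : {B : 𝒜 | A ⊂ (B : Set Ordinal)}.Nonempty :=
      ⟨⟨Set.Iio δ, hδA⟩, HasSubset.Subset.ssubset_of_ne (hsub A hA) hAδ⟩
    obtain ⟨C, hC, hCmin⟩ := hwf.has_min _ hne
    obtain ⟨β, hβC, hβA⟩ := Set.exists_of_ssubset hC
    have hβδ : β < δ := hsub C C.2 hβC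
    refine ⟨α, hαδ, β, hβδ, ?_⟩
    apply Set.Subset.antisymm
    · exact Set.subset_sUnion_of_mem ⟨hA, hα, hβA⟩
    · intro x hx
      obtain ⟨B, ⟨hB, hαB, hβB⟩, hxB⟩ := hx
      rcases htree A hA B hB ⟨α, hα, hαB⟩ with h | h
      · rcases eq_or_ne A B with rfl | hne'
        · exact hxB
        · exfalso
          have hAB : A ⊂ B := HasSubset.Subset.ssubset_of_ne h hne'
          rcases htree B hB C C.2 ⟨α, hαB, hC.1 hα⟩ with h2 | h2
          · rcases eq_or_ne B (C : Set Ordinal) with h3 | h3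
            · exact hβB (h3 ▸ hβC)
            · exact hCmin ⟨B, hB⟩ hAB (HasSubset.Subset.ssubset_of_ne h2 h3)
          · exact hβB (h2 hβC)
      · exact h hxB
  have key2 : ∀ α < δ, ∀ β < δ, (⋃₀ {B ∈ 𝒜 | α ∈ B ∧ β ∉ B}).Nonempty →
      ⋃₀ {B ∈ 𝒜 | α ∈ B ∧ β ∉ B} ∈ 𝒜 := by
    intro α _ β _ hne
    obtain ⟨x, B, hB, _⟩ := hne
    refine hcc _ (fun B hB => hB.1) ⟨B, hB⟩ ?_
    intro B1 hB1 B2 hB2 _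
    exact htree B1 hB1.1 B2 hB2.1 ⟨α, hB1.2.1, hB2.2.1⟩
  refine ⟨key, key2, ?_⟩
  -- cardinality
  have hsubT : 𝒜 ⊆ insert ∅ (insert (Set.Iio δ)
      ((fun p : Set.Iio δ × Set.Iio δ => ⋃₀ {B ∈ 𝒜 | (p.1 : Ordinal) ∈ B ∧ (p.2 : Ordinal) ∉ B}) ''
        Set.univ)) := by
    intro A hA
    rcases Set.eq_empty_or_nonempty A with rfl | hAne
    · exact Set.mem_insert _ _
    rcases key A hA hAne with rfl | ⟨α, hα, β, hβ, hEq⟩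
    · exact Set.mem_insert_of_mem _ (Set.mem_insert _ _)
    · exact Set.mem_insert_of_mem _ (Set.mem_insert_of_mem _
        ⟨(⟨α, hα⟩, ⟨β, hβ⟩), Set.mem_univ _, hEq.symm⟩)
  have hIio : Cardinal.mk (Set.Iio δ) = Cardinal.lift.{1} δ.card := Ordinal.mk_Iio_ordinal δ
  have hcard : Cardinal.aleph0 ≤ Cardinal.lift.{1} δ.card :=
    Cardinal.aleph0_le_lift.2 (Ordinal.aleph0_le_card.2 hδ)
  have h1 : Cardinal.mk 𝒜 ≤
      Cardinal.mk (Set.Iio δ × Set.Iio δ) + 1 + 1 := by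
    refine (Cardinal.mk_le_mk_of_subset hsubT).trans ?_
    refine Cardinal.mk_insert_le.trans ?_
    gcongr
    refine Cardinal.mk_insert_le.trans ?_
    gcongr
    exact Cardinal.mk_image_le.trans (Cardinal.mk_univ.le)
  refine h1.trans (le_of_eq ?_)
  rw [Cardinal.mk_prod, hIio, Cardinal.lift_id, Cardinal.mul_eq_self hcard,
    Cardinal.add_one_eq hcard, Cardinal.add_one_eq hcard]
end

section
/- Let κ be a cardinal and 𝒜 ⊆ [κ]^κ (each member of 𝒜 a subset of κ of size κ) well-founded and ∩-closed. Then 𝒜* = {A∩ξ : A ∈ 𝒜, ξ ≤ κ} is well-founded and ∩-closed, and X(𝒜) is a closed subspace of X(𝒜*). -/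
open Set Topology

/-- No member of `𝒜` (which has size `κ`) fits inside a small initial segment. -/
lemma keyCard (κ : Cardinal.{0}) {B : Set Ordinal.{0}}
    (hB : Cardinal.mk B = Cardinal.lift.{1} κ)
    {ξ : Ordinal.{0}} (hξ : ξ < κ.ord) (hs : B ⊆ Set.Iio ξ) : False := by
  have h1 : Cardinal.mk B ≤ Cardinal.mk (Set.Iio ξ) := Cardinal.mk_le_mk_of_subset hs
  rw [hB, Ordinal.mk_Iio_ordinal] at h1
  exact absurd h1 (not_le.mpr (Cardinal.lift_lt.mpr (Cardinal.lt_ord.mp hξ)))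

/-- Well-foundedness of the star family. -/
lemma wfAux (κ : Cardinal.{0}) (𝒜 : Set (Set Ordinal.{0}))
    (hwf : WellFounded (fun A B : 𝒜 => (A : Set Ordinal) ⊂ (B : Set Ordinal)))
    (hic : InterClosed 𝒜) :
    WellFounded (fun A B : ↥{S | ∃ A ∈ 𝒜, ∃ ξ ≤ κ.ord, S = A ∩ Set.Iio ξ} =>
      (A : Set Ordinal) ⊂ (B : Set Ordinal)) := by
  set 𝒜' := {S | ∃ A ∈ 𝒜, ∃ ξ ≤ κ.ord, S = A ∩ Set.Iio ξ} with h𝒜'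
  set r := fun A B : ↥𝒜' => (A : Set Ordinal) ⊂ (B : Set Ordinal) with hr
  haveI : IsIrrefl ↥𝒜' r := ⟨fun a ha => ssubset_irrefl _ ha⟩
  haveI : IsTrans ↥𝒜' r := ⟨fun a b c h1 h2 => h1.trans h2⟩
  haveI : IsStrictOrder ↥𝒜' r := ⟨⟩
  rw [RelEmbedding.wellFounded_iff_isEmpty]
  constructor
  intro f
  set g : ℕ → Set Ordinal.{0} := fun n => ((f n : ↥𝒜') : Set Ordinal) with hg
  have hdesc : ∀ n, g (n + 1) ⊂ g n := fun n => f.map_rel_iff.2 (Nat.lt_succ_self n)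
  have hrep : ∀ n, ∃ A ∈ 𝒜, ∃ ξ ≤ κ.ord, g n = A ∩ Set.Iio ξ := fun n => (f n).2
  choose A hA ξ hξ hgn using hrep
  have hne : ∀ n, (g n).Nonempty := by
    intro n
    rw [Set.nonempty_iff_ne_empty]
    intro h0
    have h1 := hdesc n
    rw [h0] at h1
    exact h1.not_subset (Set.empty_subset _)
  let B : ℕ → Set Ordinal.{0} := fun n => Nat.rec (A 0) (fun k Bk => Bk ∩ A (k + 1)) n
  have hBs : ∀ n, B (n + 1) = B n ∩ A (n + 1) := fun n => rfl
  have key : ∀ n, B n ∈ 𝒜 ∧ g n ⊆ B n ∧ B n ⊆ A n ∧ g n = B n ∩ Set.Iio (ξ n) := by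
    intro n
    induction n with
    | zero =>
      refine ⟨hA 0, ?_, subset_rfl, hgn 0⟩
      rw [hgn 0]; exact Set.inter_subset_left
    | succ k ih =>
      obtain ⟨hmem, hgB, hBA, hgeq⟩ := ih
      have hsub1 : g (k + 1) ⊆ B (k + 1) := by
        rw [hBs k]
        refine Set.subset_inter ((hdesc k).1.trans hgB) ?_
        rw [hgn (k + 1)]; exact Set.inter_subset_left
      have hmem' : B (k + 1) ∈ 𝒜 := by
        rcases hic (B k) hmem (A (k + 1)) (hA (k + 1)) with hmm | hmm
        · exact hmm
        · exfalso
          obtain ⟨x, hx⟩ := hne (k + 1)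
          have hx2 : x ∈ B k ∩ A (k + 1) := hsub1 hx
          rw [Set.mem_singleton_iff.mp hmm] at hx2
          exact hx2
      refine ⟨hmem', hsub1, by rw [hBs k]; exact Set.inter_subset_right, ?_⟩
      apply Set.Subset.antisymm
      · refine Set.subset_inter hsub1 ?_
        rw [hgn (k + 1)]; exact Set.inter_subset_right
      · rw [hgn (k + 1)]
        exact Set.inter_subset_inter_left _
          (by rw [hBs k]; exact Set.inter_subset_right)
  have hstepB : ∀ n, B (n + 1) ⊆ B n := fun n => by
    rw [hBs n]; exact Set.inter_subset_left
  have hBmono : ∀ m n, m ≤ n → B n ⊆ B m := by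
    intro m n hmn
    induction n, hmn using Nat.le_induction with
    | base => exact subset_rfl
    | succ k hk ih => exact (hstepB k).trans ih
  obtain ⟨Bel, hBelmem, hmin⟩ := hwf.has_min
    (Set.range (fun n => (⟨B n, (key n).1⟩ : ↥𝒜))) ⟨_, Set.mem_range_self 0⟩
  obtain ⟨N, hN⟩ := hBelmem
  have hBel : (Bel : Set Ordinal) = B N := by rw [← hN]
  have hconst : ∀ n, N ≤ n → B n = B N := by
    intro n hn
    by_contra hne'
    refine hmin ⟨B n, (key n).1⟩ (Set.mem_range_self n) ?_
    show B n ⊂ (Bel : Set Ordinal)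
    rw [hBel]
    exact ssubset_iff_subset_ne.mpr ⟨hBmono N n hn, hne'⟩
  have hstep2 : ∀ n, ∃ x, x ∈ g (N + n) ∧ x ∉ g (N + n + 1) := by
    intro n
    obtain ⟨x, hx1, hx2⟩ := Set.exists_of_ssubset (hdesc (N + n))
    exact ⟨x, hx1, hx2⟩
  choose μ hμ1 hμ2 using hstep2
  have hdec : ∀ n, μ (n + 1) < μ n := by
    intro n
    have e1 : g (N + n) = B N ∩ Set.Iio (ξ (N + n)) := by
      rw [(key (N + n)).2.2.2, hconst (N + n) (Nat.le_add_right N n)]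
    have e2 : g (N + n + 1) = B N ∩ Set.Iio (ξ (N + n + 1)) := by
      rw [(key (N + n + 1)).2.2.2, hconst (N + n + 1) (by omega)]
    have h1 : μ n ∈ B N ∩ Set.Iio (ξ (N + n)) := by rw [← e1]; exact hμ1 n
    have h2 : μ (n + 1) ∈ B N ∩ Set.Iio (ξ (N + n + 1)) := by
      have h2' := hμ1 (n + 1)
      rw [show N + (n + 1) = N + n + 1 from rfl, e2] at h2'
      exact h2'
    have h3 : ξ (N + n + 1) ≤ μ n := by
      by_contra hlt
      push_neg at hlt
      apply hμ2 n
      rw [e2]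
      exact ⟨h1.1, hlt⟩
    exact lt_of_lt_of_le h2.2 h3
  obtain ⟨o, ⟨m, rfl⟩, hmo⟩ := Ordinal.lt_wf.has_min (Set.range μ) ⟨μ 0, Set.mem_range_self 0⟩
  exact hmo (μ (m + 1)) (Set.mem_range_self _) (hdec m)

/-- If `𝒜 ⊆ [κ]^κ` is well-founded and `∩`-closed then `𝒜* = {A ∩ ξ : A ∈ 𝒜, ξ ≤ κ}` is
well-founded and `∩`-closed, and `X(𝒜)` is a closed subspace of `X(𝒜*)`. -/
theorem stmt14 (κ : Cardinal.{0}) (𝒜 : Set (Set Ordinal.{0}))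
    (hsub : ∀ A ∈ 𝒜, A ⊆ Set.Iio κ.ord)
    (hcard : ∀ A ∈ 𝒜, Cardinal.mk A = Cardinal.lift.{1} κ)
    (hwf : WellFounded (fun A B : 𝒜 => (A : Set Ordinal) ⊂ (B : Set Ordinal)))
    (hic : InterClosed 𝒜) :
    WellFounded (fun A B : ↥{S | ∃ A ∈ 𝒜, ∃ ξ ≤ κ.ord, S = A ∩ Set.Iio ξ} =>
      (A : Set Ordinal) ⊂ (B : Set Ordinal)) ∧
    InterClosed {S | ∃ A ∈ 𝒜, ∃ ξ ≤ κ.ord, S = A ∩ Set.Iio ξ} ∧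
    𝒜 ⊆ {S | ∃ A ∈ 𝒜, ∃ ξ ≤ κ.ord, S = A ∩ Set.Iio ξ} ∧
    ∀ h : 𝒜 ⊆ {S | ∃ A ∈ 𝒜, ∃ ξ ≤ κ.ord, S = A ∩ Set.Iio ξ},
      @IsClosedEmbedding 𝒜 ↥{S | ∃ A ∈ 𝒜, ∃ ξ ≤ κ.ord, S = A ∩ Set.Iio ξ}
        (famTop 𝒜) (famTop {S | ∃ A ∈ 𝒜, ∃ ξ ≤ κ.ord, S = A ∩ Set.Iio ξ})
        (Set.inclusion h) := by
  refine ⟨wfAux κ 𝒜 hwf hic, ?_, ?_, ?_⟩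
  · -- InterClosed
    rintro S ⟨A, hA, ξ, hξ, rfl⟩ T ⟨A', hA', ξ', hξ', rfl⟩
    have heq : A ∩ Set.Iio ξ ∩ (A' ∩ Set.Iio ξ') = A ∩ A' ∩ Set.Iio (min ξ ξ') := by
      ext x
      simp only [Set.mem_inter_iff, Set.mem_Iio, lt_min_iff]
      tauto
    rcases hic A hA A' hA' with hmm | hmm
    · exact Set.mem_union_left _
        ⟨A ∩ A', hmm, min ξ ξ', le_trans (min_le_left _ _) hξ, heq⟩
    · refine Set.mem_union_right _ ?_
      simp only [Set.mem_singleton_iff] at hmm ⊢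
      rw [heq, hmm, Set.empty_inter]
  · intro A hA
    exact ⟨A, hA, κ.ord, le_rfl, (Set.inter_eq_self_of_subset_left (hsub A hA)).symm⟩
  · intro h
    set 𝒜' := {S | ∃ A ∈ 𝒜, ∃ ξ ≤ κ.ord, S = A ∩ Set.Iio ξ} with h𝒜'
    letI t𝒜 : TopologicalSpace ↥𝒜 := famTop 𝒜
    letI t𝒜' : TopologicalSpace ↥𝒜' := famTop 𝒜'
    show IsClosedEmbedding (Set.inclusion h)
    have hpre : ∀ T : Set Ordinal, (Set.inclusion h) ⁻¹' (Subtype.val ⁻¹' famU 𝒜' T)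
        = Subtype.val ⁻¹' famU 𝒜 T := by
      intro T
      ext C
      simp only [Set.mem_preimage, famU, Set.mem_setOf_eq, Set.coe_inclusion]
      exact ⟨fun ⟨_, h2⟩ => ⟨C.2, h2⟩, fun ⟨_, h2⟩ => ⟨h C.2, h2⟩⟩
    have hgen𝒜 : ∀ T ∈ 𝒜, IsOpen[famTop 𝒜] (Subtype.val ⁻¹' famU 𝒜 T) := fun T hT =>
      TopologicalSpace.isOpen_generateFrom_of_mem ⟨T, hT, Or.inl rfl⟩
    have hgen𝒜c : ∀ T ∈ 𝒜, IsOpen[famTop 𝒜] ((Subtype.val ⁻¹' famU 𝒜 T)ᶜ) := fun T hT =>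
      TopologicalSpace.isOpen_generateFrom_of_mem ⟨T, hT, Or.inr rfl⟩
    have hopen𝒜 : ∀ T ∈ 𝒜', IsOpen[famTop 𝒜] (Subtype.val ⁻¹' famU 𝒜 T) ∧
        IsOpen[famTop 𝒜] ((Subtype.val ⁻¹' famU 𝒜 T)ᶜ) := by
      rintro T ⟨A, hA, ξ, hξ, rfl⟩
      rcases eq_or_lt_of_le hξ with rfl | hlt
      · have heq : famU 𝒜 (A ∩ Set.Iio κ.ord) = famU 𝒜 A := by
          ext C
          simp only [famU, Set.mem_setOf_eq]
          exact ⟨fun ⟨h1, h2⟩ => ⟨h1, h2.trans Set.inter_subset_left⟩,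
            fun ⟨h1, h2⟩ => ⟨h1, Set.subset_inter h2 (hsub C h1)⟩⟩
        rw [heq]
        exact ⟨hgen𝒜 A hA, hgen𝒜c A hA⟩
      · have heq : famU 𝒜 (A ∩ Set.Iio ξ) = ∅ := by
          ext C
          simp only [famU, Set.mem_setOf_eq, Set.mem_empty_iff_false, iff_false, not_and]
          intro hC hCsub
          exact keyCard κ (hcard C hC) hlt (hCsub.trans Set.inter_subset_right)
        rw [heq]
        simp only [Set.preimage_empty, Set.compl_empty]
        exact ⟨isOpen_empty, isOpen_univ⟩
    have htopo : famTop 𝒜 = TopologicalSpace.induced (Set.inclusion h) (famTop 𝒜') := by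
      apply le_antisymm
      · rw [show famTop 𝒜' = TopologicalSpace.generateFrom
            {s | ∃ A ∈ 𝒜', s = (Subtype.val ⁻¹' famU 𝒜' A : Set ↥𝒜') ∨
              s = ((Subtype.val ⁻¹' famU 𝒜' A)ᶜ : Set ↥𝒜')} from rfl,
          induced_generateFrom_eq, TopologicalSpace.le_generateFrom_iff_subset_isOpen]
        rintro s ⟨s', ⟨T, hT, hc⟩, rfl⟩
        rcases hc with rfl | rfl
        · rw [Set.mem_setOf_eq, hpre T]
          exact (hopen𝒜 T hT).1
        · rw [Set.mem_setOf_eq, Set.preimage_compl, hpre T]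
          exact (hopen𝒜 T hT).2
      · refine TopologicalSpace.le_generateFrom_iff_subset_isOpen.mpr ?_
        rintro s ⟨T, hT, hc⟩
        have hTopen : IsOpen[famTop 𝒜'] (Subtype.val ⁻¹' famU 𝒜' T) :=
          TopologicalSpace.isOpen_generateFrom_of_mem ⟨T, h hT, Or.inl rfl⟩
        have hTopenc : IsOpen[famTop 𝒜'] ((Subtype.val ⁻¹' famU 𝒜' T)ᶜ) :=
          TopologicalSpace.isOpen_generateFrom_of_mem ⟨T, h hT, Or.inr rfl⟩
        rcases hc with rfl | rfl
        · exact isOpen_induced_iff.mpr ⟨_, hTopen, hpre T⟩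
        · exact isOpen_induced_iff.mpr ⟨_, hTopenc,
            by rw [Set.preimage_compl, hpre T]⟩
    have hrange : Set.range (Set.inclusion h) = {S : ↥𝒜' | (S : Set Ordinal) ∈ 𝒜} := by
      ext S
      constructor
      · rintro ⟨C, rfl⟩
        exact C.2
      · intro hS
        exact ⟨⟨S, hS⟩, Subtype.ext rfl⟩
    refine ⟨⟨⟨htopo⟩, Set.inclusion_injective h⟩, ?_⟩
    rw [← isOpen_compl_iff]
    rw [isOpen_iff_forall_mem_open]
    intro S hS
    have hS𝒜 : (S : Set Ordinal) ∉ 𝒜 := by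
      intro hmem
      exact hS (by rw [hrange]; exact hmem)
    obtain ⟨A, hA, ξ, hξ, hSeq⟩ := S.2
    have hlt : ξ < κ.ord := by
      rcases eq_or_lt_of_le hξ with rfl | hlt
      · exfalso
        apply hS𝒜
        rw [hSeq, Set.inter_eq_self_of_subset_left (hsub A hA)]
        exact hA
      · exact hlt
    refine ⟨Subtype.val ⁻¹' famU 𝒜' ↑S, ?_, ?_, ?_⟩
    · intro T hT hTr
      have hTmem : (T : Set Ordinal) ∈ 𝒜 := by rw [hrange] at hTr; exact hTr
      refine keyCard κ (hcard (↑T) hTmem) hlt ?_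
      have hTS : (T : Set Ordinal) ⊆ ↑S := hT.2
      rw [hSeq] at hTS
      exact hTS.trans Set.inter_subset_right
    · exact TopologicalSpace.isOpen_generateFrom_of_mem ⟨↑S, S.2, Or.inl rfl⟩
    · exact ⟨S.2, subset_rfl⟩
end

section
/- For a cardinal κ and an ordinal γ < κ⁺, the family E_γ = { [κ^{1+α}·ξ, κ^{1+α}·(ξ+1)) : α ≤ γ, κ^{1+α}·ξ < κ^γ } of intervals of ordinals (with ordinal exponentiation) is well-founded, ∩-closed, tree-like and chain-closed, and the rank of the interval [κ^{1+α}·ξ, κ^{1+α}·(ξ+1)) with respect to ⊊ in E_γ is α. -/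
/-!
Blocks of exponent `e` are the fibres of `x ↦ x / κ ^ e`, and `x / κ ^ (a + d) = x / κ ^ a / κ ^ d`,
so two blocks that meet are nested, the one of larger exponent being the larger. Hence the level
`α` of `[κ^(1+α)·ξ, κ^(1+α)·(ξ+1))` strictly increases along `⊊`, and it is the rank because every
smaller level occurs among the sub-blocks with the same left end.

The union of a chain of blocks is the union of its blocks through the least point `a` of the
union, and these all start at `a`. By continuity of `α ↦ κ ^ (1 + α)` that union is
`[a, a + κ ^ (1 + σ))` for the supremum `σ` of their levels, and `κ ^ (1 + σ)` divides `a`,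
being the supremum of divisors of `a` that divide it.
-/

open Set Topology

theorem TreeLike.interClosed {X : Type*} {𝒜 : Set (Set X)} (h : TreeLike 𝒜) :
    InterClosed 𝒜 := by
  intro A hA B hB
  rcases (A ∩ B).eq_empty_or_nonempty with hAB | hAB
  · exact Or.inr hAB
  · rcases h A hA B hB hAB with hs | hs
    · exact Or.inl (by rwa [inter_eq_left.2 hs])
    · exact Or.inl (by rwa [inter_eq_right.2 hs])

theorem Acc.rank_eq_of_rel_lt_of_exists_rel {α : Type*} {r : α → α → Prop}
    (f : α → Ordinal) (hf : ∀ ⦃a b⦄, r a b → f a < f b)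
    (hf' : ∀ b, ∀ o < f b, ∃ a, r a b ∧ f a = o) {a : α} (ha : Acc r a) : ha.rank = f a := by
  induction ha with
  | intro a hacc ih =>
    apply le_antisymm
    · rw [Acc.rank_eq]
      exact Ordinal.iSup_le fun b => Order.succ_le_of_lt (ih b b.2 ▸ hf b.2)
    · refine le_of_forall_lt fun o ho => ?_
      obtain ⟨b, hba, rfl⟩ := hf' a o ho
      rw [← ih b hba]
      exact (Acc.intro a hacc).rank_lt_of_rel hba

namespace Ordinal

universe u

theorem div_mul_eq_div_div (a b c : Ordinal) : a / (b * c) = a / b / c := by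
  rcases eq_or_ne b 0 with rfl | hb
  · simp
  rcases eq_or_ne c 0 with rfl | hc
  · simp
  refine eq_of_forall_le_iff fun d => ?_
  rw [← mul_le_iff_le_div (mul_ne_zero hb hc), ← mul_le_iff_le_div hc, ← mul_le_iff_le_div hb,
    mul_assoc]

theorem dvd_of_forall_dvd_sSup {T : Set Ordinal} {a : Ordinal} (hT : sSup T ≠ 0)
    (hdvd : ∀ t ∈ T, t ∣ a) (hdvd_sSup : ∀ t ∈ T, t ∣ sSup T) : sSup T ∣ a := by
  rw [dvd_iff_mod_eq_zero]
  by_contra hr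
  refine (mod_lt a hT).not_ge (csSup_le' fun t ht => le_of_dvd hr ?_)
  rw [dvd_iff_mod_eq_zero, mod_mod_of_dvd a (hdvd_sSup t ht)]
  exact mod_eq_zero_of_dvd (hdvd t ht)

def block (k e ξ : Ordinal) : Set Ordinal := Ico (k ^ e * ξ) (k ^ e * (ξ + 1))

variable {k : Ordinal.{u}}

theorem block_eq_Ico_add (k e ξ : Ordinal) : block k e ξ = Ico (k ^ e * ξ) (k ^ e * ξ + k ^ e) := by
  rw [block, mul_add_one]

theorem mem_block_iff (hk : k ≠ 0) {e ξ x : Ordinal} : x ∈ block k e ξ ↔ x / k ^ e = ξ :=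
  (div_eq_iff (opow_ne_zero e hk)).symm

theorem left_mem_block (hk : k ≠ 0) (e ξ : Ordinal) : k ^ e * ξ ∈ block k e ξ := by
  rw [mem_block_iff hk, mul_div_cancel _ (opow_ne_zero e hk)]

theorem block_subset_block_of_le (hk : k ≠ 0) {a b ξ η x : Ordinal} (hab : a ≤ b)
    (hxa : x ∈ block k a ξ) (hxb : x ∈ block k b η) : block k a ξ ⊆ block k b η := by
  obtain ⟨d, rfl⟩ := le_iff_exists_add.1 hab
  intro y hy
  rw [mem_block_iff hk] at hxa hxb hy ⊢
  rw [opow_add, div_mul_eq_div_div] at hxb ⊢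
  rw [hy, ← hxa, hxb]

theorem le_of_block_subset_block (hk : 1 < k) {a b ξ η : Ordinal}
    (h : block k a ξ ⊆ block k b η) : a ≤ b := by
  have hne : k ^ a * ξ < k ^ a * ξ + k ^ a :=
    lt_add_of_pos_right _ (opow_pos a (zero_lt_one.trans hk))
  rw [block_eq_Ico_add, block_eq_Ico_add] at h
  obtain ⟨hleft, hright⟩ := (Ico_subset_Ico_iff hne).1 h
  have : k ^ a * ξ + k ^ a ≤ k ^ a * ξ + k ^ b := hright.trans (add_le_add_left hleft _)
  exact (opow_le_opow_iff_right hk).1 ((add_le_add_iff_left _).1 this)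

theorem eq_of_block_eq_block (hk : 1 < k) {a b ξ η : Ordinal}
    (h : block k a ξ = block k b η) : a = b :=
  le_antisymm (le_of_block_subset_block hk h.le) (le_of_block_subset_block hk h.ge)

theorem lt_of_block_ssubset_block (hk : 1 < k) {a b ξ η : Ordinal}
    (h : block k a ξ ⊂ block k b η) : a < b := by
  refine (le_of_block_subset_block hk h.subset).lt_of_ne ?_
  rintro rfl
  have hk0 : k ≠ 0 := (zero_lt_one.trans hk).ne'
  have hx := left_mem_block hk0 a ξ
  exact h.not_subset (block_subset_block_of_le hk0 le_rfl (h.subset hx) hx)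

theorem block_ssubset_block_add (hk : 1 < k) {a d : Ordinal} (hd : d ≠ 0) (ξ : Ordinal) :
    block k a (k ^ d * ξ) ⊂ block k (a + d) ξ := by
  have hk0 : k ≠ 0 := (zero_lt_one.trans hk).ne'
  have hleft : k ^ (a + d) * ξ = k ^ a * (k ^ d * ξ) := by rw [opow_add, mul_assoc]
  refine ssubset_of_subset_of_ne (block_subset_block_of_le hk0 le_self_add
    (left_mem_block hk0 _ _) (hleft ▸ left_mem_block hk0 _ _)) fun h => hd ?_
  simpa using eq_of_block_eq_block hk h

/-- The family `E_γ` for `κ = k`. -/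
def blockFamily (k γ : Ordinal) : Set (Set Ordinal) :=
  {S | ∃ α ξ : Ordinal, α ≤ γ ∧ k ^ (1 + α) * ξ < k ^ γ ∧ S = block k (1 + α) ξ}

variable {γ : Ordinal}

theorem Ico_mem_blockFamily (hk : k ≠ 0) {α a : Ordinal} (hα : α ≤ γ) (hdvd : k ^ (1 + α) ∣ a)
    (ha : a < k ^ γ) : Ico a (a + k ^ (1 + α)) ∈ blockFamily k γ := by
  have hcancel := div_mul_cancel (opow_ne_zero (1 + α) hk) hdvd
  exact ⟨α, a / k ^ (1 + α), hα, by rwa [hcancel], by rw [block_eq_Ico_add, hcancel]⟩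

theorem treeLike_blockFamily (hk : k ≠ 0) : TreeLike (blockFamily k γ) := by
  rintro _ ⟨α, ξ, -, -, rfl⟩ _ ⟨β, η, -, -, rfl⟩ ⟨x, hxA, hxB⟩
  rcases le_total (1 + α) (1 + β) with h | h
  · exact Or.inl (block_subset_block_of_le hk h hxA hxB)
  · exact Or.inr (block_subset_block_of_le hk h hxB hxA)

theorem biUnion_Ico_mem_blockFamily (hk : 1 < k) {S : Set Ordinal} {a : Ordinal}
    (hS : S.Nonempty) (hSγ : ∀ α ∈ S, α ≤ γ) (hdvd : ∀ α ∈ S, k ^ (1 + α) ∣ a)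
    (ha : a < k ^ γ) : ⋃ α ∈ S, Ico a (a + k ^ (1 + α)) ∈ blockFamily k γ := by
  have hk0 : k ≠ 0 := (zero_lt_one.trans hk).ne'
  have hbdd : BddAbove S := ⟨γ, hSγ⟩
  have hnormal : Order.IsNormal fun α : Ordinal.{u} => k ^ (1 + α) :=
    (isNormal_opow hk).comp (isNormal_add_right 1)
  have hsup := hnormal.map_sSup hS hbdd
  have hdvd_sup : k ^ (1 + sSup S) ∣ a := by
    rw [hsup]
    refine dvd_of_forall_dvd_sSup (hsup ▸ opow_ne_zero _ hk0) ?_ ?_ <;>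
      rintro _ ⟨α, hα, rfl⟩
    · exact hdvd α hα
    · rw [← hsup]
      exact opow_dvd_opow k ((add_le_add_iff_left 1).2 (le_csSup hbdd hα))
  have hnormal' : Order.IsNormal fun α : Ordinal.{u} => a + k ^ (1 + α) :=
    (isNormal_add_right a).comp hnormal
  have hunion : ⋃ α ∈ S, Ico a (a + k ^ (1 + α)) = Ico a (a + k ^ (1 + sSup S)) := by
    ext y
    simp only [mem_iUnion₂, mem_Ico, exists_prop, hnormal'.map_sSup hS hbdd,
      lt_csSup_iff (hnormal'.strictMono.monotone.map_bddAbove hbdd) (hS.image _),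
      exists_mem_image]
    grind
  rw [hunion]
  exact Ico_mem_blockFamily hk0 (csSup_le hS hSγ) hdvd_sup ha

theorem chainClosed_blockFamily (hk : 1 < k) : ChainClosed (blockFamily k γ) := by
  have hk0 : k ≠ 0 := (zero_lt_one.trans hk).ne'
  intro ℬ hℬ hne hchain
  have hUne : (⋃₀ ℬ).Nonempty := by
    obtain ⟨B, hB⟩ := hne
    obtain ⟨α, ξ, -, -, rfl⟩ := hℬ hB
    exact ⟨_, mem_sUnion_of_mem (left_mem_block hk0 _ _) hB⟩
  set a := sInf (⋃₀ ℬ)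
  obtain ⟨B₀, hB₀, haB₀⟩ := csInf_mem hUne
  have hstart : ∀ B ∈ ℬ, a ∈ B →
      ∃ α ≤ γ, k ^ (1 + α) ∣ a ∧ a < k ^ γ ∧ B = Ico a (a + k ^ (1 + α)) := by
    intro B hB haB
    obtain ⟨α, ξ, hα, hξ, rfl⟩ := hℬ hB
    have hleft : k ^ (1 + α) * ξ = a :=
      le_antisymm haB.1 (csInf_le' (mem_sUnion_of_mem (left_mem_block hk0 _ _) hB))
    exact ⟨α, hα, ⟨ξ, hleft.symm⟩, hleft ▸ hξ, by rw [block_eq_Ico_add, hleft]⟩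
  set S := {α | α ≤ γ ∧ k ^ (1 + α) ∣ a ∧ Ico a (a + k ^ (1 + α)) ∈ ℬ}
  have hU : ⋃₀ ℬ = ⋃ α ∈ S, Ico a (a + k ^ (1 + α)) := by
    refine subset_antisymm ?_ (iUnion₂_subset fun α hα => subset_sUnion_of_mem hα.2.2)
    rintro y ⟨B, hB, hyB⟩
    obtain ⟨B', hB', haB', hyB'⟩ : ∃ B' ∈ ℬ, a ∈ B' ∧ y ∈ B' := by
      rcases eq_or_ne B B₀ with rfl | hne
      · exact ⟨B, hB, haB₀, hyB⟩
      rcases hchain hB hB₀ hne with h | h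
      · exact ⟨B₀, hB₀, haB₀, h hyB⟩
      · exact ⟨B, hB, h haB₀, hyB⟩
    obtain ⟨α, hα, hdvd, -, rfl⟩ := hstart B' hB' haB'
    exact mem_biUnion ⟨hα, hdvd, hB'⟩ hyB'
  obtain ⟨α₀, hα₀, hdvd₀, ha, hB₀eq⟩ := hstart B₀ hB₀ haB₀
  rw [hU]
  exact biUnion_Ico_mem_blockFamily hk ⟨α₀, hα₀, hdvd₀, hB₀eq ▸ hB₀⟩
    (fun α hα => hα.1) (fun α hα => hα.2.1) ha

noncomputable def blockLevel (A : blockFamily k γ) : Ordinal := Classical.choose A.2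

theorem exists_eq_block_blockLevel (A : blockFamily k γ) :
    ∃ ξ, blockLevel A ≤ γ ∧ k ^ (1 + blockLevel A) * ξ < k ^ γ ∧
      (A : Set Ordinal) = block k (1 + blockLevel A) ξ :=
  Classical.choose_spec A.2

theorem blockLevel_eq (hk : 1 < k) {A : blockFamily k γ} {α ξ : Ordinal}
    (h : (A : Set Ordinal) = block k (1 + α) ξ) : blockLevel A = α := by
  obtain ⟨ξ', -, -, h'⟩ := exists_eq_block_blockLevel A
  exact (add_right_inj 1).1 (eq_of_block_eq_block hk (h'.symm.trans h))

theorem blockLevel_lt_blockLevel (hk : 1 < k) {A B : blockFamily k γ}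
    (h : (A : Set Ordinal) ⊂ B) : blockLevel A < blockLevel B := by
  obtain ⟨ξ, -, -, hA⟩ := exists_eq_block_blockLevel A
  obtain ⟨η, -, -, hB⟩ := exists_eq_block_blockLevel B
  rw [hA, hB] at h
  exact (add_lt_add_iff_left 1).1 (lt_of_block_ssubset_block hk h)

theorem exists_ssubset_blockLevel_eq (hk : 1 < k) (B : blockFamily k γ) {o : Ordinal}
    (ho : o < blockLevel B) : ∃ A : blockFamily k γ, (A : Set Ordinal) ⊂ B ∧ blockLevel A = o := by
  obtain ⟨ξ, hBγ, hξ, hB⟩ := exists_eq_block_blockLevel B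
  obtain ⟨d, hd⟩ := le_iff_exists_add.1 ((add_le_add_iff_left 1).2 ho.le)
  have hd0 : d ≠ 0 := by
    rintro rfl
    rw [add_zero, add_right_inj] at hd
    exact ho.ne' hd
  have hleft : k ^ (1 + o) * (k ^ d * ξ) = k ^ (1 + blockLevel B) * ξ := by
    rw [hd, opow_add k (1 + o) d, mul_assoc]
  have hmem : block k (1 + o) (k ^ d * ξ) ∈ blockFamily k γ :=
    ⟨o, _, ho.le.trans hBγ, hleft ▸ hξ, rfl⟩
  refine ⟨⟨_, hmem⟩, ?_, blockLevel_eq hk rfl⟩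
  rw [hB, hd]
  exact block_ssubset_block_add hk hd0 ξ

theorem wellFounded_ssubset_blockFamily (hk : 1 < k) :
    WellFounded fun A B : blockFamily k γ => (A : Set Ordinal) ⊂ B :=
  Subrelation.wf (blockLevel_lt_blockLevel hk) (InvImage.wf blockLevel wellFounded_lt)

theorem rank_blockFamily (hk : 1 < k) (A : blockFamily k γ) :
    ((wellFounded_ssubset_blockFamily hk).apply A).rank = lift.{u + 1} (blockLevel A) := by
  refine Acc.rank_eq_of_rel_lt_of_exists_rel _
    (fun A B h => lift_lt.2 (blockLevel_lt_blockLevel hk h)) (fun B o ho => ?_) _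
  obtain ⟨o, hlt, rfl⟩ := lt_lift_iff.1 ho
  obtain ⟨A, hA, rfl⟩ := exists_ssubset_blockLevel_eq hk B hlt
  exact ⟨A, hA, rfl⟩

end Ordinal

theorem stmt16_general (c : Cardinal.{0}) (hc : Cardinal.aleph0 ≤ c) (γ : Ordinal.{0}) :
    ∃ hwf : WellFounded (fun A B :
        ↥{S : Set Ordinal.{0} | ∃ α ξ : Ordinal, α ≤ γ ∧ c.ord ^ (1 + α) * ξ < c.ord ^ γ ∧
          S = Set.Ico (c.ord ^ (1 + α) * ξ) (c.ord ^ (1 + α) * (ξ + 1))} =>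
        (A : Set Ordinal) ⊂ (B : Set Ordinal)),
      InterClosed {S : Set Ordinal.{0} | ∃ α ξ : Ordinal, α ≤ γ ∧
          c.ord ^ (1 + α) * ξ < c.ord ^ γ ∧
          S = Set.Ico (c.ord ^ (1 + α) * ξ) (c.ord ^ (1 + α) * (ξ + 1))} ∧
      TreeLike {S : Set Ordinal.{0} | ∃ α ξ : Ordinal, α ≤ γ ∧
          c.ord ^ (1 + α) * ξ < c.ord ^ γ ∧
          S = Set.Ico (c.ord ^ (1 + α) * ξ) (c.ord ^ (1 + α) * (ξ + 1))} ∧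
      ChainClosed {S : Set Ordinal.{0} | ∃ α ξ : Ordinal, α ≤ γ ∧
          c.ord ^ (1 + α) * ξ < c.ord ^ γ ∧
          S = Set.Ico (c.ord ^ (1 + α) * ξ) (c.ord ^ (1 + α) * (ξ + 1))} ∧
      ∀ (α ξ : Ordinal) (_ : α ≤ γ) (_ : c.ord ^ (1 + α) * ξ < c.ord ^ γ)
        (h : Set.Ico (c.ord ^ (1 + α) * ξ) (c.ord ^ (1 + α) * (ξ + 1)) ∈
          {S : Set Ordinal.{0} | ∃ α ξ : Ordinal, α ≤ γ ∧ c.ord ^ (1 + α) * ξ < c.ord ^ γ ∧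
            S = Set.Ico (c.ord ^ (1 + α) * ξ) (c.ord ^ (1 + α) * (ξ + 1))}),
        (hwf.apply (⟨_, h⟩ :
          ↥{S : Set Ordinal.{0} | ∃ α ξ : Ordinal, α ≤ γ ∧ c.ord ^ (1 + α) * ξ < c.ord ^ γ ∧
            S = Set.Ico (c.ord ^ (1 + α) * ξ) (c.ord ^ (1 + α) * (ξ + 1))})).rank =
          Ordinal.lift.{1} α := by
  have hk : 1 < c.ord := Ordinal.one_lt_omega0.trans_le (Cardinal.omega0_le_ord.2 hc)
  have hk0 : c.ord ≠ 0 := (zero_lt_one.trans hk).ne'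
  refine ⟨Ordinal.wellFounded_ssubset_blockFamily hk,
    (Ordinal.treeLike_blockFamily hk0).interClosed, Ordinal.treeLike_blockFamily hk0,
    Ordinal.chainClosed_blockFamily hk, fun α ξ _ _ h => ?_⟩
  have hrank := Ordinal.rank_blockFamily hk ⟨_, h⟩
  rw [Ordinal.blockLevel_eq hk rfl] at hrank
  exact hrank

/-- For an infinite cardinal `κ` and `γ < κ⁺`, the family
`E_γ = {[κ^(1+α)·ξ, κ^(1+α)·(ξ+1)) : α ≤ γ, κ^(1+α)·ξ < κ^γ}` (ordinal arithmetic) is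
well-founded, `∩`-closed, tree-like and chain-closed, and the rank of
`[κ^(1+α)·ξ, κ^(1+α)·(ξ+1))` in `⟨E_γ, ⊊⟩` is `α`. -/
theorem stmt16 (c : Cardinal.{0}) (hc : Cardinal.aleph0 ≤ c) (γ : Ordinal.{0})
    (hγ : γ < (Order.succ c).ord) :
    ∃ hwf : WellFounded (fun A B :
        ↥{S : Set Ordinal.{0} | ∃ α ξ : Ordinal, α ≤ γ ∧ c.ord ^ (1 + α) * ξ < c.ord ^ γ ∧
          S = Set.Ico (c.ord ^ (1 + α) * ξ) (c.ord ^ (1 + α) * (ξ + 1))} =>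
        (A : Set Ordinal) ⊂ (B : Set Ordinal)),
      InterClosed {S : Set Ordinal.{0} | ∃ α ξ : Ordinal, α ≤ γ ∧
          c.ord ^ (1 + α) * ξ < c.ord ^ γ ∧
          S = Set.Ico (c.ord ^ (1 + α) * ξ) (c.ord ^ (1 + α) * (ξ + 1))} ∧
      TreeLike {S : Set Ordinal.{0} | ∃ α ξ : Ordinal, α ≤ γ ∧
          c.ord ^ (1 + α) * ξ < c.ord ^ γ ∧
          S = Set.Ico (c.ord ^ (1 + α) * ξ) (c.ord ^ (1 + α) * (ξ + 1))} ∧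
      ChainClosed {S : Set Ordinal.{0} | ∃ α ξ : Ordinal, α ≤ γ ∧
          c.ord ^ (1 + α) * ξ < c.ord ^ γ ∧
          S = Set.Ico (c.ord ^ (1 + α) * ξ) (c.ord ^ (1 + α) * (ξ + 1))} ∧
      ∀ (α ξ : Ordinal) (_ : α ≤ γ) (_ : c.ord ^ (1 + α) * ξ < c.ord ^ γ)
        (h : Set.Ico (c.ord ^ (1 + α) * ξ) (c.ord ^ (1 + α) * (ξ + 1)) ∈
          {S : Set Ordinal.{0} | ∃ α ξ : Ordinal, α ≤ γ ∧ c.ord ^ (1 + α) * ξ < c.ord ^ γ ∧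
            S = Set.Ico (c.ord ^ (1 + α) * ξ) (c.ord ^ (1 + α) * (ξ + 1))}),
        (hwf.apply (⟨_, h⟩ :
          ↥{S : Set Ordinal.{0} | ∃ α ξ : Ordinal, α ≤ γ ∧ c.ord ^ (1 + α) * ξ < c.ord ^ γ ∧
            S = Set.Ico (c.ord ^ (1 + α) * ξ) (c.ord ^ (1 + α) * (ξ + 1))})).rank =
          Ordinal.lift.{1} α :=
  stmt16_general c hc γ
end
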